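/- arXiv:2211.00442 — 13 statements merged into one kernel-verified Lean document; each statement's English description precedes it below -/
import Mathlib

section
/- Let q : ℤ² → ℝ³ and let ξ ∈ ℝ³ be a fixed vector such that for every (u,v) ∈ ℤ² the vector q₁₂(u,v) is a scalar multiple of ξ. Define A(u,v) := [q₁(u−1,v), q₁(u,v), ξ] and B(u,v) := [q₂(u,v), q₂(u,v−1), ξ]. Then for all (u,v) ∈ ℤ² one has A(u,v+1) = A(u,v) and B(u+1,v) = B(u,v); i.e., A depends only on u and B depends only on v. -/
noncomputable section

abbrev R3 : Type := ℝ × ℝ × ℝ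
abbrev R2 : Type := ℝ × ℝ

/-- Determinant of the 3×3 matrix with columns `a`, `b`, `c`. -/
def det3 (a b c : R3) : ℝ :=
  a.1 * (b.2.1 * c.2.2 - b.2.2 * c.2.1)
    - b.1 * (a.2.1 * c.2.2 - a.2.2 * c.2.1)
    + c.1 * (a.2.1 * b.2.2 - a.2.2 * b.2.1)

/-- Determinant of the 2×2 matrix with columns `a`, `b`. -/
def det2 (a b : R2) : ℝ := a.1 * b.2 - a.2 * b.1

def e3 : R3 := ((0 : ℝ), (0 : ℝ), (1 : ℝ))

/-- First discrete partial derivative `q₁`. -/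
def D1 (q : ℤ → ℤ → R3) (u v : ℤ) : R3 := q (u + 1) v - q u v

/-- Second discrete partial derivative `q₂`. -/
def D2 (q : ℤ → ℤ → R3) (u v : ℤ) : R3 := q u (v + 1) - q u v

/-- Mixed discrete second derivative `q₁₂`. -/
def D12 (q : ℤ → ℤ → R3) (u v : ℤ) : R3 :=
  q (u + 1) (v + 1) - q (u + 1) v - q u (v + 1) + q u v

/-- Discrete second derivative `q₁₁`. -/
def D11 (q : ℤ → ℤ → R3) (u v : ℤ) : R3 := q (u + 1) v - (2 : ℝ) • q u v + q (u - 1) v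

/-- Discrete second derivative `q₂₂`. -/
def D22 (q : ℤ → ℤ → R3) (u v : ℤ) : R3 := q u (v + 1) - (2 : ℝ) • q u v + q u (v - 1)

/-- The discrete affine metric `Ω(u,v) = [q₁(u,v), q₂(u,v), ξ]`. -/
def Omega (q : ℤ → ℤ → R3) (ξ : R3) (u v : ℤ) : ℝ := det3 (D1 q u v) (D2 q u v) ξ

/-- Cubic form coefficient `A(u,v) = [q₁(u−1,v), q₁(u,v), ξ]`. -/
def Acoef (q : ℤ → ℤ → R3) (ξ : R3) (u v : ℤ) : ℝ := det3 (D1 q (u - 1) v) (D1 q u v) ξ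

/-- Cubic form coefficient `B(u,v) = [q₂(u,v), q₂(u,v−1), ξ]`. -/
def Bcoef (q : ℤ → ℤ → R3) (ξ : R3) (u v : ℤ) : ℝ := det3 (D2 q u v) (D2 q u (v - 1)) ξ

/-- `q` is a discrete improper indefinite affine sphere with affine normal `ξ`. -/
def IsDIIAS (q : ℤ → ℤ → R3) (ξ : R3) : Prop :=
  ∀ u v : ℤ,
    D12 q u v = Omega q ξ u v • ξ ∧
    0 < Omega q ξ u v ∧
    D1 q (u - 1) v ∈ Submodule.span ℝ {D1 q u v, D2 q u v} ∧
    D2 q u (v - 1) ∈ Submodule.span ℝ {D1 q u v, D2 q u v}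

/-- `x(u,v) = ½(α(u)+β(v))`. -/
def xcc (α β : ℤ → R2) (u v : ℤ) : R2 := (1 / 2 : ℝ) • (α u + β v)

/-- `y(u,v) = ½(β(v)−α(u))`. -/
def ycc (α β : ℤ → R2) (u v : ℤ) : R2 := (1 / 2 : ℝ) • (β v - α u)

/-- `z` satisfies the discrete centre-chord equations for the pair `(α,β)`. -/
def IsCentreChordZ (α β : ℤ → R2) (z : ℤ → ℤ → ℝ) : Prop :=
  ∀ u v : ℤ,
    z (u + 1) v - z u v = det2 (xcc α β (u + 1) v - xcc α β u v) (ycc α β u v) ∧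
    z u (v + 1) - z u v = det2 (xcc α β u (v + 1) - xcc α β u v) (ycc α β u v)

/-- The centre-chord net `q(u,v) = (x(u,v), z(u,v))`. -/
def ccq (α β : ℤ → R2) (z : ℤ → ℤ → ℝ) (u v : ℤ) : R3 :=
  ((xcc α β u v).1, (xcc α β u v).2, z u v)

/-- `Ω(u,v) = ¼ det(α₁(u), β₂(v))` of the centre-chord construction. -/
def OmegaCC (α β : ℤ → R2) (u v : ℤ) : ℝ :=
  (1 / 4 : ℝ) * det2 (α (u + 1) - α u) (β (v + 1) - β v)

/-- `α₁(u)` is discretely parallel to `β(v)`. -/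
def dpAB (α β : ℤ → R2) (u v : ℤ) : Prop :=
  0 < det2 (α (u + 1) - α u) (β (v + 1) - β v) * det2 (α (u + 1) - α u) (β (v - 1) - β v)

/-- `β₂(v)` is discretely parallel to `α(u)`. -/
def dpBA (α β : ℤ → R2) (u v : ℤ) : Prop :=
  0 < det2 (β (v + 1) - β v) (α (u + 1) - α u) * det2 (β (v + 1) - β v) (α (u - 1) - α u)

/-- Genericity assumption (G1). -/
def G1 (α β : ℤ → R2) : Prop :=
  ∀ u v : ℤ,
    LinearIndependent ℝ ![β (v - 1) - α u, β (v + 1) - α u] ∧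
    ∃ s t : ℝ, 0 < s ∧ 0 < t ∧
      β v - α u = s • (β (v - 1) - α u) + t • (β (v + 1) - α u)

/-- Genericity assumption (G2). -/
def G2 (α β : ℤ → R2) : Prop :=
  ∀ u v : ℤ,
    LinearIndependent ℝ ![α (u - 1) - β v, α (u + 1) - β v] ∧
    ∃ s t : ℝ, 0 < s ∧ 0 < t ∧
      α u - β v = s • (α (u - 1) - β v) + t • (α (u + 1) - β v)

/-- Genericity assumption (G3): no edge of `α` is parallel to an edge of `β`. -/
def G3 (α β : ℤ → R2) : Prop :=
  ∀ u v : ℤ, det2 (α (u + 1) - α u) (β (v + 1) - β v) ≠ 0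

/-- Euclidean dot product on `ℝ³`. -/
def dot3 (a b : R3) : ℝ := a.1 * b.1 + a.2.1 * b.2.1 + a.2.2 * b.2.2

/-- Projection of `ℝ³` onto the first two coordinates. -/
def projxy (p : R3) : R2 := (p.1, p.2.1)

lemma det3_add_smul_fst (a b c : R3) (t : ℝ) :
    det3 (a + t • c) b c = det3 a b c := by
  simp only [det3, Prod.fst_add, Prod.snd_add, Prod.smul_fst, Prod.smul_snd, smul_eq_mul]
  ring

lemma det3_add_smul_snd (a b c : R3) (t : ℝ) :
    det3 a (b + t • c) c = det3 a b c := by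
  simp only [det3, Prod.fst_add, Prod.snd_add, Prod.smul_fst, Prod.smul_snd, smul_eq_mul]
  ring

lemma D1_shift (q : ℤ → ℤ → R3) (u v : ℤ) :
    D1 q u (v + 1) = D1 q u v + D12 q u v := by
  simp only [D1, D12]; abel

lemma D2_shift (q : ℤ → ℤ → R3) (u v : ℤ) :
    D2 q (u + 1) v = D2 q u v + D12 q u v := by
  simp only [D2, D12]; abel

/-- if `q₁₂(u,v)` is always a scalar multiple of `ξ`, then
`A(u,v) = [q₁(u−1,v), q₁(u,v), ξ]` depends only on `u` and
`B(u,v) = [q₂(u,v), q₂(u,v−1), ξ]` depends only on `v`. -/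
theorem stmt0 (q : ℤ → ℤ → R3) (ξ : R3)
    (h : ∀ u v : ℤ, ∃ c : ℝ, D12 q u v = c • ξ) :
    ∀ u v : ℤ,
      Acoef q ξ u (v + 1) = Acoef q ξ u v ∧
      Bcoef q ξ (u + 1) v = Bcoef q ξ u v := by
  intro u v
  obtain ⟨c1, h1⟩ := h (u - 1) v
  obtain ⟨c2, h2⟩ := h u v
  obtain ⟨c3, h3⟩ := h u (v - 1)
  have hv : v - 1 + 1 = v := by ring
  constructor
  · rw [Acoef, D1_shift, D1_shift, h1, h2, det3_add_smul_snd, det3_add_smul_fst]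
    rfl
  · rw [Bcoef, D2_shift, D2_shift, h2, h3, det3_add_smul_snd, det3_add_smul_fst]
    rfl
end
end

section
/- Let q : ℤ² → ℝ³ be a DIIAS with affine normal ξ. Then for all (u,v) ∈ ℤ² and all i, j ∈ {0,1} the following structural equations hold: Ω(u−i,v−j)·q₁₁(u,v) = (Ω(u,v−j) − Ω(u−1,v−j))·q₁(u−i,v) + A(u,v)·q₂(u,v−j), and Ω(u−i,v−j)·q₂₂(u,v) = B(u,v)·q₁(u−i,v) + (Ω(u−i,v) − Ω(u−i,v−1))·q₂(u,v−j). -/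
noncomputable section

/-- the structural equations of a DIIAS. -/
theorem stmt1 (q : ℤ → ℤ → R3) (ξ : R3) (hq : IsDIIAS q ξ) :
    ∀ u v : ℤ, ∀ i j : ℤ, (i = 0 ∨ i = 1) → (j = 0 ∨ j = 1) →
      Omega q ξ (u - i) (v - j) • D11 q u v =
        (Omega q ξ u (v - j) - Omega q ξ (u - 1) (v - j)) • D1 q (u - i) v +
          Acoef q ξ u v • D2 q u (v - j) ∧
      Omega q ξ (u - i) (v - j) • D22 q u v =
        Bcoef q ξ u v • D1 q (u - i) v +
          (Omega q ξ (u - i) v - Omega q ξ (u - i) (v - 1)) • D2 q u (v - j) := by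
  intro u v i j hi hj
  obtain ⟨a, b, hab⟩ := Submodule.mem_span_pair.1 (hq u v).2.2.1
  obtain ⟨c, d, hcd⟩ := Submodule.mem_span_pair.1 (hq u v).2.2.2
  have h12b := (hq (u-1) v).1
  have h12c := (hq u (v-1)).1
  have h12d := (hq (u-1) (v-1)).1
  have e1 : D2 q (u-1) v = D2 q u v - Omega q ξ (u-1) v • ξ := by
    rw [← h12b]; simp only [D2, D12, sub_add_cancel]; module
  have e2 : D1 q u (v-1) = D1 q u v - Omega q ξ u (v-1) • ξ := by
    rw [← h12c]; simp only [D1, D12, sub_add_cancel]; module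
  have e3 : D1 q (u-1) (v-1) = D1 q (u-1) v - Omega q ξ (u-1) (v-1) • ξ := by
    rw [← h12d]; simp only [D1, D12, sub_add_cancel]; module
  have e4 : D2 q (u-1) (v-1) = D2 q u (v-1) - Omega q ξ (u-1) (v-1) • ξ := by
    rw [← h12d]; simp only [D2, D12, sub_add_cancel]; module
  have s1 : Omega q ξ (u-1) v = a * Omega q ξ u v := by
    conv_lhs => rw [Omega, ← hab, e1]

    simp only [Omega, det3, Prod.fst_sub, Prod.snd_sub, Prod.fst_add, Prod.snd_add,
      Prod.smul_fst, Prod.smul_snd, smul_eq_mul]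
    ring
  have s2 : Omega q ξ u (v-1) = d * Omega q ξ u v := by
    conv_lhs => rw [Omega, ← hcd, e2]

    simp only [Omega, det3, Prod.fst_sub, Prod.snd_sub, Prod.fst_add, Prod.snd_add,
      Prod.smul_fst, Prod.smul_snd, smul_eq_mul]
    ring
  have s3 : Omega q ξ (u-1) (v-1) = (a * d - b * c) * Omega q ξ u v := by
    conv_lhs => rw [Omega, e3, e4, ← hab, ← hcd]

    simp only [Omega, det3, Prod.fst_sub, Prod.snd_sub, Prod.fst_add, Prod.snd_add,
      Prod.smul_fst, Prod.smul_snd, smul_eq_mul]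
    ring
  have sA : Acoef q ξ u v = -b * Omega q ξ u v := by
    rw [Acoef, ← hab, Omega]
    simp only [Omega, det3, Prod.fst_sub, Prod.snd_sub, Prod.fst_add, Prod.snd_add,
      Prod.smul_fst, Prod.smul_snd, smul_eq_mul]
    ring
  have sB : Bcoef q ξ u v = -c * Omega q ξ u v := by
    rw [Bcoef, ← hcd, Omega]
    simp only [Omega, det3, Prod.fst_sub, Prod.snd_sub, Prod.fst_add, Prod.snd_add,
      Prod.smul_fst, Prod.smul_snd, smul_eq_mul]
    ring
  have h11 : D11 q u v = D1 q u v - D1 q (u-1) v := by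
    simp only [D11, D1, sub_add_cancel]; module
  have h22 : D22 q u v = D2 q u v - D2 q u (v-1) := by
    simp only [D22, D2, sub_add_cancel]; module
  rcases hi with rfl | rfl <;> rcases hj with rfl | rfl <;>
    constructor <;>
    simp only [sub_zero, h11, h22, ← hab, ← hcd, s1, s2, s3, sA, sB] <;>
    module
end
end

section
/- Let q : ℤ² → ℝ³ be a DIIAS with affine normal ξ. Then the compatibility equation Ω(u,v−1)·Ω(u−1,v) − Ω(u,v)·Ω(u−1,v−1) = A(u,v)·B(u,v) holds for all (u,v) ∈ ℤ². -/
noncomputable section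

lemma det3_sub_smul_left (x y ξ : R3) (c : ℝ) : det3 (x - c • ξ) y ξ = det3 x y ξ := by
  simp only [det3, Prod.fst_sub, Prod.snd_sub, Prod.smul_fst, Prod.smul_snd, smul_eq_mul]
  ring

lemma det3_sub_smul_right (x y ξ : R3) (c : ℝ) : det3 x (y - c • ξ) ξ = det3 x y ξ := by
  simp only [det3, Prod.fst_sub, Prod.snd_sub, Prod.smul_fst, Prod.smul_snd, smul_eq_mul]
  ring

lemma det3_sub_smul_both (x y ξ : R3) (c d : ℝ) :
    det3 (x - c • ξ) (y - d • ξ) ξ = det3 x y ξ := by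
  simp only [det3, Prod.fst_sub, Prod.snd_sub, Prod.smul_fst, Prod.smul_snd, smul_eq_mul]
  ring

/-- the compatibility equation of a DIIAS. -/
theorem stmt2 (q : ℤ → ℤ → R3) (ξ : R3) (hq : IsDIIAS q ξ) :
    ∀ u v : ℤ,
      Omega q ξ u (v - 1) * Omega q ξ (u - 1) v -
        Omega q ξ u v * Omega q ξ (u - 1) (v - 1) =
      Acoef q ξ u v * Bcoef q ξ u v := by
  intro u v
  obtain ⟨-, -, ha', hb'⟩ := hq u v
  obtain ⟨p, r, hpr⟩ := Submodule.mem_span_pair.mp ha'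
  obtain ⟨s, t, hst⟩ := Submodule.mem_span_pair.mp hb'
  have eu : u - 1 + 1 = u := by ring
  have ev : v - 1 + 1 = v := by ring
  -- shifted derivatives
  have h2 : D2 q (u - 1) v = D2 q u v - Omega q ξ (u - 1) v • ξ := by
    have hd : D2 q u v - D2 q (u - 1) v = Omega q ξ (u - 1) v • ξ := by
      rw [← (hq (u - 1) v).1]
      simp only [D12, D2, eu]; abel
    rw [← hd]; abel
  have h1 : D1 q u (v - 1) = D1 q u v - Omega q ξ u (v - 1) • ξ := by
    have hd : D1 q u v - D1 q u (v - 1) = Omega q ξ u (v - 1) • ξ := by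
      rw [← (hq u (v - 1)).1]
      simp only [D12, D1, ev]; abel
    rw [← hd]; abel
  have h1' : D1 q (u - 1) (v - 1) = D1 q (u - 1) v - Omega q ξ (u - 1) (v - 1) • ξ := by
    have hd : D1 q (u - 1) v - D1 q (u - 1) (v - 1) = Omega q ξ (u - 1) (v - 1) • ξ := by
      rw [← (hq (u - 1) (v - 1)).1]
      simp only [D12, D1, ev]; abel
    rw [← hd]; abel
  have h2' : D2 q (u - 1) (v - 1) = D2 q u (v - 1) - Omega q ξ (u - 1) (v - 1) • ξ := by
    have hd : D2 q u (v - 1) - D2 q (u - 1) (v - 1) = Omega q ξ (u - 1) (v - 1) • ξ := by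
      rw [← (hq (u - 1) (v - 1)).1]
      simp only [D12, D2, eu]; abel
    rw [← hd]; abel
  -- express all Omegas via the four derivatives at (u,v)
  have o1 : Omega q ξ (u - 1) v = det3 (D1 q (u - 1) v) (D2 q u v) ξ := by
    rw [Omega, h2, det3_sub_smul_right]
  have o2 : Omega q ξ u (v - 1) = det3 (D1 q u v) (D2 q u (v - 1)) ξ := by
    rw [Omega, h1, det3_sub_smul_left]
  have o12 : Omega q ξ (u - 1) (v - 1) = det3 (D1 q (u - 1) v) (D2 q u (v - 1)) ξ := by
    rw [Omega, h1', h2', det3_sub_smul_both]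
  rw [o1, o2, o12, Acoef, Bcoef, Omega, ← hpr, ← hst]
  simp only [det3, Prod.fst_sub, Prod.snd_sub, Prod.fst_add, Prod.snd_add,
    Prod.smul_fst, Prod.smul_snd, smul_eq_mul]
  ring
end
end

section
/- Let α, β : ℤ → ℝ² be arbitrary. Then there exists a function z : ℤ² → ℝ satisfying z(u+1,v) − z(u,v) = det(x(u+1,v) − x(u,v), y(u,v)) and z(u,v+1) − z(u,v) = det(x(u,v+1) − x(u,v), y(u,v)) for all (u,v) ∈ ℤ²; moreover, every such z satisfies z(u+1,v+1) − z(u+1,v) − z(u,v+1) + z(u,v) = ¼·det(α₁(u), β₂(v)) for all (u,v) ∈ ℤ². -/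
noncomputable section

/-- Integer-indexed antiderivative: `isum f (n+1) - isum f n = f n`. -/
def isum (f : ℤ → ℝ) (n : ℤ) : ℝ :=
  (∑ i ∈ Finset.range n.toNat, f i) - ∑ i ∈ Finset.range (-n).toNat, f (-(i : ℤ) - 1)

lemma isum_step (f : ℤ → ℝ) (n : ℤ) : isum f (n + 1) - isum f n = f n := by
  rcases le_or_gt 0 n with h | h
  · have h1 : (n + 1).toNat = n.toNat + 1 := by omega
    have h2 : (-(n + 1)).toNat = 0 := by omega
    have h3 : (-n).toNat = 0 := by omega
    have h4 : ((n.toNat : ℤ)) = n := Int.toNat_of_nonneg h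
    unfold isum
    rw [h1, h2, h3, Finset.sum_range_succ, h4]
    simp
  · have h1 : (n + 1).toNat = 0 := by omega
    have h2 : n.toNat = 0 := by omega
    have h3 : (-n).toNat = (-(n + 1)).toNat + 1 := by omega
    have h4 : (-(((-(n + 1)).toNat : ℤ)) - 1) = n := by omega
    unfold isum
    rw [h1, h2, h3, Finset.sum_range_succ, h4]
    simp

/-- existence of the height function `z` of the discrete centre-chord
construction, and the value of its mixed second derivative. -/
theorem stmt3 (α β : ℤ → R2) :
    (∃ z : ℤ → ℤ → ℝ, IsCentreChordZ α β z) ∧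
    (∀ z : ℤ → ℤ → ℝ, IsCentreChordZ α β z →
      ∀ u v : ℤ,
        z (u + 1) (v + 1) - z (u + 1) v - z u (v + 1) + z u v =
          (1 / 4 : ℝ) * det2 (α (u + 1) - α u) (β (v + 1) - β v)) := by
  constructor
  · refine ⟨fun u v => (1 / 4) * det2 (α u) (β v)
      + isum (fun w => -(1 / 4) * det2 (α (w + 1)) (α w)) u
      + isum (fun w => (1 / 4) * det2 (β (w + 1)) (β w)) v, fun u v => ?_⟩
    have hA := isum_step (fun w => -(1 / 4) * det2 (α (w + 1)) (α w)) u
    have hB := isum_step (fun w => (1 / 4) * det2 (β (w + 1)) (β w)) v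
    constructor
    · simp only [det2, xcc, ycc, Prod.fst_sub, Prod.snd_sub, Prod.fst_add, Prod.snd_add,
        Prod.smul_fst, Prod.smul_snd, smul_eq_mul] at hA ⊢
      linear_combination hA
    · simp only [det2, xcc, ycc, Prod.fst_sub, Prod.snd_sub, Prod.fst_add, Prod.snd_add,
        Prod.smul_fst, Prod.smul_snd, smul_eq_mul] at hB ⊢
      linear_combination hB
  · intro z h u v
    have h1 := (h (u + 1) v).2
    have h2 := (h u v).2
    simp only [det2, xcc, ycc, Prod.fst_sub, Prod.snd_sub, Prod.fst_add, Prod.snd_add,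
      Prod.smul_fst, Prod.smul_snd, smul_eq_mul] at h1 h2 ⊢
    linear_combination h1 - h2
end
end

section
/- Let α, β : ℤ → ℝ² satisfy Ω(u,v) := ¼·det(α₁(u), β₂(v)) > 0 for all (u,v) ∈ ℤ², and let q be a centre-chord net of (α,β). Then q is a DIIAS with affine normal ξ = (0,0,1): for all (u,v) one has q₁₂(u,v) = Ω(u,v)·(0,0,1), [q₁(u,v), q₂(u,v), (0,0,1)] = Ω(u,v), the vectors q₁(u−1,v) and q₂(u,v−1) lie in the linear span of q₁(u,v) and q₂(u,v), and the cubic form coefficients are given by A(u,v) = ¼·det(α₁(u−1), α₁(u)) and B(u,v) = −¼·det(β₂(v−1), β₂(v)). -/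
noncomputable section

/-- the discrete centre-chord construction yields a DIIAS with
affine normal `(0,0,1)` and the stated cubic form coefficients. -/
theorem stmt4 (α β : ℤ → R2) (z : ℤ → ℤ → ℝ)
    (hΩ : ∀ u v : ℤ, 0 < OmegaCC α β u v)
    (hz : IsCentreChordZ α β z) :
    ∀ u v : ℤ,
      D12 (ccq α β z) u v = OmegaCC α β u v • e3 ∧
      det3 (D1 (ccq α β z) u v) (D2 (ccq α β z) u v) e3 = OmegaCC α β u v ∧
      D1 (ccq α β z) (u - 1) v ∈
        Submodule.span ℝ {D1 (ccq α β z) u v, D2 (ccq α β z) u v} ∧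
      D2 (ccq α β z) u (v - 1) ∈
        Submodule.span ℝ {D1 (ccq α β z) u v, D2 (ccq α β z) u v} ∧
      Acoef (ccq α β z) e3 u v =
        (1 / 4 : ℝ) * det2 (α u - α (u - 1)) (α (u + 1) - α u) ∧
      Bcoef (ccq α β z) e3 u v =
        -(1 / 4 : ℝ) * det2 (β v - β (v - 1)) (β (v + 1) - β v) := by
  intro u v
  have hpos : 0 < det2 (α (u + 1) - α u) (β (v + 1) - β v) := by
    have h := hΩ u v; unfold OmegaCC at h; linarith
  have hD : det2 (α (u + 1) - α u) (β (v + 1) - β v) ≠ 0 := ne_of_gt hpos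
  have h0 := (hz (u - 1) v).1
  have h0' := (hz u (v - 1)).2
  have h1 := (hz u v).1
  have h2 := (hz u v).2
  have h1' := (hz (u + 1) v).2
  simp only [sub_add_cancel, det2, xcc, ycc, Prod.fst_add, Prod.snd_add,
    Prod.fst_sub, Prod.snd_sub, Prod.smul_fst, Prod.smul_snd, smul_eq_mul]
    at h0 h0' h1 h2 h1'
  have hgen1 : D1 (ccq α β z) u v ∈
      Submodule.span ℝ {D1 (ccq α β z) u v, D2 (ccq α β z) u v} :=
    Submodule.subset_span (Set.mem_insert _ _)
  have hgen2 : D2 (ccq α β z) u v ∈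
      Submodule.span ℝ {D1 (ccq α β z) u v, D2 (ccq α β z) u v} :=
    Submodule.subset_span (Set.mem_insert_of_mem _ rfl)
  refine ⟨?_, ?_, ?_, ?_, ?_, ?_⟩
  · simp only [D12, ccq, OmegaCC, e3, det2, xcc, Prod.ext_iff, Prod.fst_add,
      Prod.snd_add, Prod.fst_sub, Prod.snd_sub, Prod.smul_fst, Prod.smul_snd,
      smul_eq_mul, Prod.mk.injEq, mul_zero, mul_one]
    refine ⟨by ring, by ring, ?_⟩
    linear_combination h1' - h2
  · simp only [det3, D1, D2, ccq, OmegaCC, e3, det2, xcc, Prod.fst_add,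
      Prod.snd_add, Prod.fst_sub, Prod.snd_sub, Prod.smul_fst, Prod.smul_snd,
      smul_eq_mul]
    ring
  · have key : det2 (α (u + 1) - α u) (β (v + 1) - β v) • D1 (ccq α β z) (u - 1) v =
        det2 (α u - α (u - 1)) (β (v + 1) - β v) • D1 (ccq α β z) u v +
        det2 (α (u + 1) - α u) (α u - α (u - 1)) • D2 (ccq α β z) u v := by
      simp only [D1, D2, ccq, det2, xcc, Prod.ext_iff, Prod.fst_add, Prod.snd_add,
        Prod.fst_sub, Prod.snd_sub, Prod.smul_fst, Prod.smul_snd, smul_eq_mul,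
        sub_add_cancel, Prod.mk.injEq]
      refine ⟨by ring, by ring, ?_⟩
      rw [h0, h1, h2]
      ring
    have hmem : det2 (α (u + 1) - α u) (β (v + 1) - β v) • D1 (ccq α β z) (u - 1) v ∈
        Submodule.span ℝ {D1 (ccq α β z) u v, D2 (ccq α β z) u v} := by
      rw [key]
      exact Submodule.add_mem _ (Submodule.smul_mem _ _ hgen1) (Submodule.smul_mem _ _ hgen2)
    have hsm := Submodule.smul_mem
      (Submodule.span ℝ {D1 (ccq α β z) u v, D2 (ccq α β z) u v})
      (det2 (α (u + 1) - α u) (β (v + 1) - β v))⁻¹ hmem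
    rwa [inv_smul_smul₀ hD] at hsm
  · have key : det2 (α (u + 1) - α u) (β (v + 1) - β v) • D2 (ccq α β z) u (v - 1) =
        det2 (β v - β (v - 1)) (β (v + 1) - β v) • D1 (ccq α β z) u v +
        det2 (α (u + 1) - α u) (β v - β (v - 1)) • D2 (ccq α β z) u v := by
      simp only [D1, D2, ccq, det2, xcc, Prod.ext_iff, Prod.fst_add, Prod.snd_add,
        Prod.fst_sub, Prod.snd_sub, Prod.smul_fst, Prod.smul_snd, smul_eq_mul,
        sub_add_cancel, Prod.mk.injEq]
      refine ⟨by ring, by ring, ?_⟩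
      rw [h0', h1, h2]
      ring
    have hmem : det2 (α (u + 1) - α u) (β (v + 1) - β v) • D2 (ccq α β z) u (v - 1) ∈
        Submodule.span ℝ {D1 (ccq α β z) u v, D2 (ccq α β z) u v} := by
      rw [key]
      exact Submodule.add_mem _ (Submodule.smul_mem _ _ hgen1) (Submodule.smul_mem _ _ hgen2)
    have hsm := Submodule.smul_mem
      (Submodule.span ℝ {D1 (ccq α β z) u v, D2 (ccq α β z) u v})
      (det2 (α (u + 1) - α u) (β (v + 1) - β v))⁻¹ hmem
    rwa [inv_smul_smul₀ hD] at hsm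
  · simp only [Acoef, det3, D1, ccq, e3, det2, xcc, Prod.fst_add, Prod.snd_add,
      Prod.fst_sub, Prod.snd_sub, Prod.smul_fst, Prod.smul_snd, smul_eq_mul,
      sub_add_cancel]
    ring
  · simp only [Bcoef, det3, D2, ccq, e3, det2, xcc, Prod.fst_add, Prod.snd_add,
      Prod.fst_sub, Prod.snd_sub, Prod.smul_fst, Prod.smul_snd, smul_eq_mul,
      sub_add_cancel]
    ring
end
end

section
/- Let α, β : ℤ → ℝ² and x(u,v) = ½(α(u) + β(v)). For any (u,v) ∈ ℤ², the following are equivalent: (1) β₂(v) is discretely parallel to α(u) (so that the segment from x(u,v) to x(u,v+1) is an edge of the DMPTL); (2) det(x(u,v+1) − x(u,v), x(u+1,v) − x(u,v)) · det(x(u,v+1) − x(u,v), x(u−1,v) − x(u,v)) > 0, i.e., the line through x(u,v) and x(u,v+1) leaves x(u−1,v) and x(u+1,v) strictly on the same side; (3) det(x(u,v+1) − x(u,v), x(u+1,v+1) − x(u,v+1)) · det(x(u,v+1) − x(u,v), x(u−1,v+1) − x(u,v+1)) > 0, i.e., that line leaves x(u−1,v+1) and x(u+1,v+1) strictly on the same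 side. -/
noncomputable section

/-- characterization of the edges of the DMPTL among the edges of
the planar `x`-net. -/
theorem stmt7 (α β : ℤ → R2) (u v : ℤ) :
    [dpBA α β u v,
     0 < det2 (xcc α β u (v + 1) - xcc α β u v) (xcc α β (u + 1) v - xcc α β u v) *
          det2 (xcc α β u (v + 1) - xcc α β u v) (xcc α β (u - 1) v - xcc α β u v),
     0 < det2 (xcc α β u (v + 1) - xcc α β u v)
            (xcc α β (u + 1) (v + 1) - xcc α β u (v + 1)) *
          det2 (xcc α β u (v + 1) - xcc α β u v)
            (xcc α β (u - 1) (v + 1) - xcc α β u (v + 1))].TFAE := by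
  have key : ∀ p q : R2,
      det2 ((1/2:ℝ) • p) ((1/2:ℝ) • q) = (1/4) * det2 p q := by
    intro p q
    simp [det2, Prod.smul_fst, Prod.smul_snd, smul_eq_mul]
    ring
  have hb : ∀ w : ℤ, xcc α β u (v+1) - xcc α β u w = (1/2:ℝ) • (β (v+1) - β w) := by
    intro w
    simp [xcc, smul_sub, smul_add]
  have ha : ∀ w w' : ℤ, xcc α β w (v+1) - xcc α β w' (v+1) = (1/2:ℝ) • (α w - α w') := by
    intro w w'
    simp [xcc, smul_sub, smul_add]
  have ha' : ∀ w w' : ℤ, xcc α β w v - xcc α β w' v = (1/2:ℝ) • (α w - α w') := by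
    intro w w'
    simp [xcc, smul_sub, smul_add]
  have hx : ∀ w : ℤ, xcc α β w v - xcc α β u v = (1/2:ℝ) • (α w - α u) := fun w => ha' w u
  have E := det2 (β (v+1) - β v) (α (u+1) - α u) * det2 (β (v+1) - β v) (α (u-1) - α u)
  have h2 : det2 (xcc α β u (v + 1) - xcc α β u v) (xcc α β (u + 1) v - xcc α β u v) *
      det2 (xcc α β u (v + 1) - xcc α β u v) (xcc α β (u - 1) v - xcc α β u v)
      = (1/16) * (det2 (β (v+1) - β v) (α (u+1) - α u) * det2 (β (v+1) - β v) (α (u-1) - α u)) := by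
    rw [hb v, hx (u+1), hx (u-1), key, key]
    ring
  have h3 : det2 (xcc α β u (v + 1) - xcc α β u v)
        (xcc α β (u + 1) (v + 1) - xcc α β u (v + 1)) *
      det2 (xcc α β u (v + 1) - xcc α β u v)
        (xcc α β (u - 1) (v + 1) - xcc α β u (v + 1))
      = (1/16) * (det2 (β (v+1) - β v) (α (u+1) - α u) * det2 (β (v+1) - β v) (α (u-1) - α u)) := by
    rw [hb v, ha (u+1) u, ha (u-1) u, key, key]
    ring
  have hiff : ∀ r : ℝ, (0 < (1/16) * r) ↔ 0 < r := by
    intro r; constructor <;> intro h <;> nlinarith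
  tfae_have 1 ↔ 2 := by
    rw [h2, hiff]; rfl
  tfae_have 1 ↔ 3 := by
    rw [h3, hiff]; rfl
  tfae_finish
end
end

section
/- Let α, β : ℤ → ℝ² satisfy det(α₁(u), β₂(v)) ≠ 0 for all (u,v), let q be a centre-chord net of (α,β), and fix (u,v) ∈ ℤ². Let n ∈ ℝ³ be any nonzero vector orthogonal to both q₁(u,v) and q₂(u,v), and let n' ∈ ℝ³ be any nonzero vector orthogonal to both q₁(u,v+1) and q₂(u,v+1). Then the following are equivalent: (1) β₂(v) is discretely parallel to α(u), i.e., det(β₂(v), α(u+1)−α(u)) · det(β₂(v), α(u−1)−α(u)) > 0; (2) [q₂(u,v), q(u+1,v) − q(u,v), n] · [q₂(u,v), q(u−1,v) − q(u,v), n] > 0 (in the star plane at q(u,v), the line through q(u,v) and q(u,v+1) leaves q(u−1,v) and q(u+1,v) on the same side); (3) [q₂(u,v), q(u+1,v+1) − q(u,v+1), n'] · [q₂(u,v), q(u−1,v+1) − q(u,v+1), n'] > 0 (in the star plane at q(u,v+1), that line leaves q(u−1,v+1) and q(u+1,v+1) on the same side). -/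
noncomputable section

/-- Cross product on `ℝ³`. -/
def cross3 (a b : R3) : R3 :=
  (a.2.1 * b.2.2 - a.2.2 * b.2.1, a.2.2 * b.1 - a.1 * b.2.2, a.1 * b.2.1 - a.2.1 * b.1)

/-- The lift of a 2D edge vector `t` to the centre-chord net over base point data `y`. -/
def Fcc (y t : R2) : R3 := ((1 / 2 : ℝ) * t.1, (1 / 2 : ℝ) * t.2, (1 / 4 : ℝ) * det2 t y)

lemma det3_smul (x y : R3) (t : ℝ) (p : R3) : det3 x y (t • p) = t * det3 x y p := by
  simp only [det3, Prod.smul_fst, Prod.smul_snd, smul_eq_mul]; ring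

lemma cross_third (y w1 w2 : R2) :
    (cross3 (Fcc y w1) (Fcc y w2)).2.2 = (1 / 4 : ℝ) * det2 w1 w2 := by
  simp only [cross3, Fcc, det2]; ring

lemma dot3_pos (x : R3) (h : x.2.2 ≠ 0) : 0 < dot3 x x := by
  have h2 := mul_self_pos.mpr h
  simp only [dot3]
  nlinarith [mul_self_nonneg x.1, mul_self_nonneg x.2.1]

lemma key (n a b : R3) (h1 : dot3 n a = 0) (h2 : dot3 n b = 0) :
    dot3 (cross3 a b) (cross3 a b) • n = dot3 n (cross3 a b) • cross3 a b := by
  obtain ⟨n1, n2, n3⟩ := n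
  obtain ⟨a1, a2, a3⟩ := a
  obtain ⟨b1, b2, b3⟩ := b
  simp only [dot3, cross3, Prod.ext_iff, Prod.smul_mk, Prod.mk.injEq, smul_eq_mul] at *
  refine ⟨?_, ?_, ?_⟩
  · linear_combination (((a3*b1-a1*b3)*a3 - (a1*b2-a2*b1)*a2) * h2
      - ((a3*b1-a1*b3)*b3 - (a1*b2-a2*b1)*b2) * h1)
  · linear_combination (((a1*b2-a2*b1)*a1 - (a2*b3-a3*b2)*a3) * h2
      - ((a1*b2-a2*b1)*b1 - (a2*b3-a3*b2)*b3) * h1)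
  · linear_combination (((a2*b3-a3*b2)*a2 - (a3*b1-a1*b3)*a1) * h2
      - ((a2*b3-a3*b2)*b2 - (a3*b1-a1*b3)*b1) * h1)

lemma L1 (y w1 w2 b a : R2) :
    det2 w1 w2 * det3 (Fcc y b) (Fcc y a) (cross3 (Fcc y w1) (Fcc y w2)) =
      det2 b a * dot3 (cross3 (Fcc y w1) (Fcc y w2)) (cross3 (Fcc y w1) (Fcc y w2)) := by
  simp only [Fcc, cross3, det3, det2, dot3]; ring

lemma sign_iff {k1 k2 P D : ℝ} (hk1 : 0 < k1) (hk2 : 0 < k2) (h : k1 * P = k2 * D) :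
    (0 < P ↔ 0 < D) := by
  constructor <;> intro hp <;> nlinarith

lemma starIff (y w1 w2 b p r : R2) (n : R3) (hw : det2 w1 w2 ≠ 0) (hn : n ≠ 0)
    (h1 : dot3 n (Fcc y w1) = 0) (h2 : dot3 n (Fcc y w2) = 0) :
    (0 < det3 (Fcc y b) (Fcc y p) n * det3 (Fcc y b) (Fcc y r) n ↔
      0 < det2 b p * det2 b r) := by
  have hc3 : (cross3 (Fcc y w1) (Fcc y w2)).2.2 ≠ 0 := by
    rw [cross_third]; exact mul_ne_zero (by norm_num) hw
  set c : R3 := cross3 (Fcc y w1) (Fcc y w2) with hc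
  have hcc : 0 < dot3 c c := dot3_pos c hc3
  have hkey : dot3 c c • n = dot3 n c • c := key n _ _ h1 h2
  have hnc : dot3 n c ≠ 0 := by
    intro h
    apply hn
    rw [h, zero_smul] at hkey
    rcases smul_eq_zero.mp hkey with h' | h'
    · exact absurd h' (ne_of_gt hcc)
    · exact h'
  have e1 : dot3 c c * det3 (Fcc y b) (Fcc y p) n = dot3 n c * det3 (Fcc y b) (Fcc y p) c := by
    rw [← det3_smul, hkey, det3_smul]
  have e2 : dot3 c c * det3 (Fcc y b) (Fcc y r) n = dot3 n c * det3 (Fcc y b) (Fcc y r) c := by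
    rw [← det3_smul, hkey, det3_smul]
  have f1 : det2 w1 w2 * det3 (Fcc y b) (Fcc y p) c = det2 b p * dot3 c c := L1 y w1 w2 b p
  have f2 : det2 w1 w2 * det3 (Fcc y b) (Fcc y r) c = det2 b r * dot3 c c := L1 y w1 w2 b r
  have g1 : (dot3 c c * dot3 c c) * (det3 (Fcc y b) (Fcc y p) n * det3 (Fcc y b) (Fcc y r) n)
      = (dot3 n c * dot3 n c) * (det3 (Fcc y b) (Fcc y p) c * det3 (Fcc y b) (Fcc y r) c) := by
    linear_combination (dot3 c c * det3 (Fcc y b) (Fcc y p) n) * e2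
      + (dot3 n c * det3 (Fcc y b) (Fcc y r) c) * e1
  have g2 : (det2 w1 w2 * det2 w1 w2) * (det3 (Fcc y b) (Fcc y p) c * det3 (Fcc y b) (Fcc y r) c)
      = (det2 b p * det2 b r) * (dot3 c c * dot3 c c) := by
    linear_combination (det2 w1 w2 * det3 (Fcc y b) (Fcc y p) c) * f2
      + (det2 b r * dot3 c c) * f1
  have hmain : (det2 w1 w2 * det2 w1 w2) * (det3 (Fcc y b) (Fcc y p) n * det3 (Fcc y b) (Fcc y r) n)
      = (dot3 n c * dot3 n c) * (det2 b p * det2 b r) := by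
    apply mul_left_cancel₀ (ne_of_gt (mul_pos hcc hcc))
    linear_combination (det2 w1 w2 * det2 w1 w2) * g1 + (dot3 n c * dot3 n c) * g2
  exact sign_iff (mul_self_pos.mpr hw) (mul_self_pos.mpr hnc) hmain

lemma edgeH (α β : ℤ → R2) (z : ℤ → ℤ → ℝ) (hz : IsCentreChordZ α β z) (u v : ℤ) :
    ccq α β z (u + 1) v - ccq α β z u v = Fcc (β v - α u) (α (u + 1) - α u) := by
  have h := (hz u v).1
  simp only [xcc, ycc, det2, Prod.fst_sub, Prod.snd_sub, Prod.smul_fst, Prod.smul_snd,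
    Prod.fst_add, Prod.snd_add, smul_eq_mul] at h
  simp only [ccq, Fcc, xcc, det2, Prod.ext_iff, Prod.fst_sub, Prod.snd_sub, Prod.smul_fst,
    Prod.smul_snd, Prod.fst_add, Prod.snd_add, smul_eq_mul]
  refine ⟨by ring, by ring, ?_⟩
  linear_combination h

lemma edgeHneg (α β : ℤ → R2) (z : ℤ → ℤ → ℝ) (hz : IsCentreChordZ α β z) (u v : ℤ) :
    ccq α β z (u - 1) v - ccq α β z u v = Fcc (β v - α u) (α (u - 1) - α u) := by
  have h := (hz (u - 1) v).1
  have e : u - 1 + 1 = u := by ring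
  rw [e] at h
  simp only [xcc, ycc, det2, Prod.fst_sub, Prod.snd_sub, Prod.smul_fst, Prod.smul_snd,
    Prod.fst_add, Prod.snd_add, smul_eq_mul] at h
  simp only [ccq, Fcc, xcc, det2, Prod.ext_iff, Prod.fst_sub, Prod.snd_sub, Prod.smul_fst,
    Prod.smul_snd, Prod.fst_add, Prod.snd_add, smul_eq_mul]
  refine ⟨by ring, by ring, ?_⟩
  linear_combination -h

lemma edgeV (α β : ℤ → R2) (z : ℤ → ℤ → ℝ) (hz : IsCentreChordZ α β z) (u v : ℤ) :
    ccq α β z u (v + 1) - ccq α β z u v = Fcc (β v - α u) (β (v + 1) - β v) := by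
  have h := (hz u v).2
  simp only [xcc, ycc, det2, Prod.fst_sub, Prod.snd_sub, Prod.smul_fst, Prod.smul_snd,
    Prod.fst_add, Prod.snd_add, smul_eq_mul] at h
  simp only [ccq, Fcc, xcc, det2, Prod.ext_iff, Prod.fst_sub, Prod.snd_sub, Prod.smul_fst,
    Prod.smul_snd, Prod.fst_add, Prod.snd_add, smul_eq_mul]
  refine ⟨by ring, by ring, ?_⟩
  linear_combination h

/-- characterization of singular edges of the `q`-net via the
star planes at its endpoints. -/
theorem stmt8 (α β : ℤ → R2) (z : ℤ → ℤ → ℝ)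
    (hreg : ∀ u v : ℤ, det2 (α (u + 1) - α u) (β (v + 1) - β v) ≠ 0)
    (hz : IsCentreChordZ α β z)
    (u v : ℤ) (n n' : R3) (hn : n ≠ 0) (hn' : n' ≠ 0)
    (hn1 : dot3 n (D1 (ccq α β z) u v) = 0)
    (hn2 : dot3 n (D2 (ccq α β z) u v) = 0)
    (hn'1 : dot3 n' (D1 (ccq α β z) u (v + 1)) = 0)
    (hn'2 : dot3 n' (D2 (ccq α β z) u (v + 1)) = 0) :
    [dpBA α β u v,
     0 < det3 (D2 (ccq α β z) u v) (ccq α β z (u + 1) v - ccq α β z u v) n *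
          det3 (D2 (ccq α β z) u v) (ccq α β z (u - 1) v - ccq α β z u v) n,
     0 < det3 (D2 (ccq α β z) u v)
            (ccq α β z (u + 1) (v + 1) - ccq α β z u (v + 1)) n' *
          det3 (D2 (ccq α β z) u v)
            (ccq α β z (u - 1) (v + 1) - ccq α β z u (v + 1)) n'].TFAE := by
   
  have hE1 := edgeH α β z hz u v
  have hE0 := edgeHneg α β z hz u v
  have hV := edgeV α β z hz u v
  have hE1' := edgeH α β z hz u (v + 1)
  have hE0' := edgeHneg α β z hz u (v + 1)
  have hV' := edgeV α β z hz u (v + 1)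
  have hD1 : D1 (ccq α β z) u v = Fcc (β v - α u) (α (u + 1) - α u) := hE1
  have hD2 : D2 (ccq α β z) u v = Fcc (β v - α u) (β (v + 1) - β v) := hV
  have hD1' : D1 (ccq α β z) u (v + 1) = Fcc (β (v + 1) - α u) (α (u + 1) - α u) := hE1'
  have hD2' : D2 (ccq α β z) u (v + 1) = Fcc (β (v + 1) - α u) (β (v + 1 + 1) - β (v + 1)) := hV'
  have hD2y : D2 (ccq α β z) u v = Fcc (β (v + 1) - α u) (β (v + 1) - β v) := by
    rw [hD2]
    simp only [Fcc, det2, Prod.mk.injEq, Prod.fst_sub, Prod.snd_sub]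
    exact ⟨trivial, trivial, by ring⟩
  tfae_have 1 ↔ 2 := by
    rw [hD2, hE1, hE0]
    have h1 := hn1; rw [hD1] at h1
    have h2 := hn2; rw [hD2] at h2
    exact (starIff (β v - α u) (α (u + 1) - α u) (β (v + 1) - β v) (β (v + 1) - β v)
      (α (u + 1) - α u) (α (u - 1) - α u) n (hreg u v) hn h1 h2).symm
  tfae_have 1 ↔ 3 := by
    rw [hD2y, hE1', hE0']
    have h1 := hn'1; rw [hD1'] at h1
    have h2 := hn'2; rw [hD2'] at h2
    exact (starIff (β (v + 1) - α u) (α (u + 1) - α u) (β (v + 1 + 1) - β (v + 1))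
      (β (v + 1) - β v) (α (u + 1) - α u) (α (u - 1) - α u) n' (hreg u (v + 1)) hn' h1 h2).symm
  tfae_finish
end
end

section
/- Let α, β : ℤ → ℝ² satisfy the genericity assumptions (G1), (G2), (G3). Suppose that for some (u,v) ∈ ℤ² the vector α₁(u−1) is discretely parallel to β(v). Then exactly one of the following three statements holds: (1) α₁(u) is discretely parallel to β(v); (2) β₂(v) is discretely parallel to α(u); (3) β₂(v−1) is discretely parallel to α(u). -/
noncomputable section

/-- Two linearly independent vectors in the plane have nonzero determinant. -/
lemma li_det2_ne (x y : R2) (h : LinearIndependent ℝ ![x, y]) : det2 x y ≠ 0 := by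
  intro h0
  rw [LinearIndependent.pair_iff] at h
  simp only [det2] at h0
  have key1 : y.2 • x + (-x.2) • y = 0 := by
    rw [Prod.ext_iff]
    constructor
    · simp only [Prod.fst_add, Prod.smul_fst, smul_eq_mul, Prod.fst_zero]
      nlinarith [h0]
    · simp only [Prod.snd_add, Prod.smul_snd, smul_eq_mul, Prod.snd_zero]
      ring
  have key2 : (-y.1) • x + x.1 • y = 0 := by
    rw [Prod.ext_iff]
    constructor
    · simp only [Prod.fst_add, Prod.smul_fst, smul_eq_mul, Prod.fst_zero]
      ring
    · simp only [Prod.snd_add, Prod.smul_snd, smul_eq_mul, Prod.snd_zero]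
      nlinarith [h0]
  have hx2 : x.2 = 0 := by have := (h _ _ key1).2; linarith
  have hx1 : x.1 = 0 := (h _ _ key2).2
  have key3 : (1 : ℝ) • x + (0 : ℝ) • y = 0 := by
    rw [Prod.ext_iff]
    constructor
    · simp only [Prod.fst_add, Prod.smul_fst, smul_eq_mul, Prod.fst_zero, hx1]; ring
    · simp only [Prod.snd_add, Prod.smul_snd, smul_eq_mul, Prod.snd_zero, hx2]; ring
  exact one_ne_zero (h _ _ key3).1

/-- Cone condition: if `X - P` is strictly inside the cone spanned by `Q - P` and
`R - P`, then `R - X` and `Q - X` lie strictly on opposite sides of the line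
through `X - P`. -/
lemma cone_neg (P Q R X : R2)
    (hli : LinearIndependent ℝ ![Q - P, R - P])
    (hex : ∃ s t : ℝ, 0 < s ∧ 0 < t ∧ X - P = s • (Q - P) + t • (R - P)) :
    det2 (X - P) (R - X) * det2 (X - P) (Q - X) < 0 := by
  obtain ⟨s, t, hs, ht, heq⟩ := hex
  have hE := li_det2_ne _ _ hli
  have e1 : det2 (X - P) (R - X) = s * det2 (Q - P) (R - P) := by
    have hRX : R - X = (R - P) - (X - P) := by abel
    rw [hRX, heq]
    simp only [det2, Prod.fst_sub, Prod.snd_sub, Prod.fst_add, Prod.snd_add,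
      Prod.smul_fst, Prod.smul_snd, smul_eq_mul]
    ring
  have e2 : det2 (X - P) (Q - X) = -(t * det2 (Q - P) (R - P)) := by
    have hQX : Q - X = (Q - P) - (X - P) := by abel
    rw [hQX, heq]
    simp only [det2, Prod.fst_sub, Prod.snd_sub, Prod.fst_add, Prod.snd_add,
      Prod.smul_fst, Prod.smul_snd, smul_eq_mul]
    ring
  rw [e1, e2]
  have h2 : 0 < det2 (Q - P) (R - P) * det2 (Q - P) (R - P) := mul_self_pos.mpr hE
  nlinarith [mul_pos hs ht]

/-- Arithmetic core: under the Pluecker relations and the cone sign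
conditions, the four determinants `p, q, r, s` cannot all have the same sign. -/
lemma keylemma (p q r s cA cAm cB cBm d : ℝ)
    (e1 : cB * d = cAm * p - cA * r)
    (e2 : cBm * d = cAm * q - cA * s)
    (F1 : cB * cBm < 0) (F2 : cA * cAm < 0)
    (hpq : 0 < p * q) (hpr : 0 < p * r) (hqs : 0 < q * s) (hrs : 0 < r * s) :
    False := by
  have hps : 0 < p * s := by nlinarith [mul_pos hpr hrs, mul_self_nonneg r]
  have hqr : 0 < q * r := by nlinarith [mul_pos hpq hpr, mul_self_nonneg p]
  have hcA : cA ≠ 0 := by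
    intro h0; rw [h0, zero_mul] at F2; exact absurd F2 (lt_irrefl 0)
  have hcA2 : 0 < cA * cA := mul_self_pos.mpr hcA
  have hneg : 0 < -(cA * cAm) := by linarith
  have hXY : 0 < (cAm * p - cA * r) * (cAm * q - cA * s) := by
    nlinarith [mul_nonneg (mul_self_nonneg cAm) hpq.le, mul_pos hcA2 hrs,
      mul_pos hneg hps, mul_pos hneg hqr]
  have hcon : (cAm * p - cA * r) * (cAm * q - cA * s) = (cB * cBm) * (d * d) := by
    rw [← e1, ← e2]; ring
  have hle : (cB * cBm) * (d * d) ≤ 0 :=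
    mul_nonpos_of_nonpos_of_nonneg F1.le (mul_self_nonneg d)
  rw [hcon] at hXY
  linarith

/-- Sign trichotomy: given `r*s > 0` and that not all four signs agree,
exactly one of the three products is positive. -/
lemma tri (p q r s : ℝ) (hp : p ≠ 0) (hq : q ≠ 0) (hrs : 0 < r * s)
    (notall : ¬(0 < p * q ∧ 0 < p * r ∧ 0 < q * s)) :
    (0 < p * q ∧ ¬0 < p * r ∧ ¬0 < q * s) ∨
    (¬0 < p * q ∧ 0 < p * r ∧ ¬0 < q * s) ∨
    (¬0 < p * q ∧ ¬0 < p * r ∧ 0 < q * s) := by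
  rcases lt_or_gt_of_ne (mul_ne_zero hp hq) with hpq | hpq
  · have hr : r ≠ 0 := by
      intro h0; rw [h0, zero_mul] at hrs; exact absurd hrs (lt_irrefl 0)
    have hprqs : (p * r) * (q * s) < 0 := by nlinarith
    rcases lt_or_gt_of_ne (mul_ne_zero hp hr) with hpr | hpr
    · refine Or.inr (Or.inr ⟨?_, ?_, ?_⟩)
      · intro hc; linarith
      · intro hc; linarith
      · nlinarith
    · refine Or.inr (Or.inl ⟨?_, hpr, ?_⟩)
      · intro hc; linarith
      · intro hc; nlinarith
  · left
    refine ⟨hpq, ?_, ?_⟩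
    · intro hpr
      refine notall ⟨hpq, hpr, ?_⟩
      nlinarith [mul_pos (mul_pos hpq hpr) hrs, mul_self_nonneg (p * r)]
    · intro hqs
      refine notall ⟨hpq, ?_, hqs⟩
      nlinarith [mul_pos hpq hrs]

/-- step-by-step construction of the DMPTL: exactly one of the
three continuations occurs. -/
theorem stmt9 (α β : ℤ → R2) (hG1 : G1 α β) (hG2 : G2 α β) (hG3 : G3 α β)
    (u v : ℤ) (h : dpAB α β (u - 1) v) :
    (dpAB α β u v ∧ ¬ dpBA α β u v ∧ ¬ dpBA α β u (v - 1)) ∨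
    (¬ dpAB α β u v ∧ dpBA α β u v ∧ ¬ dpBA α β u (v - 1)) ∨
    (¬ dpAB α β u v ∧ ¬ dpBA α β u v ∧ dpBA α β u (v - 1)) := by
  have hu1 : u - 1 + 1 = u := by ring
  have hv1 : v - 1 + 1 = v := by ring
  -- abbreviated determinants (as plain expressions)
  -- p = det2 A B, q = det2 A Bm, r = det2 Am B, s = det2 Am Bm
  -- with A = α(u+1)-α u, Am = α(u-1)-α u, B = β(v+1)-β v, Bm = β(v-1)-β v
  -- hypothesis gives r*s > 0
  simp only [dpAB] at h
  rw [hu1] at h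
  have e0 : det2 (α u - α (u - 1)) (β (v + 1) - β v) *
      det2 (α u - α (u - 1)) (β (v - 1) - β v) =
      det2 (α (u - 1) - α u) (β (v + 1) - β v) *
      det2 (α (u - 1) - α u) (β (v - 1) - β v) := by
    simp only [det2, Prod.fst_sub, Prod.snd_sub]; ring
  rw [e0] at h
  -- nonvanishing from G3
  have hp : det2 (α (u + 1) - α u) (β (v + 1) - β v) ≠ 0 := hG3 u v
  have hq0 := hG3 u (v - 1)
  rw [hv1] at hq0
  have hq : det2 (α (u + 1) - α u) (β (v - 1) - β v) ≠ 0 := by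
    intro h0
    apply hq0
    rw [show det2 (α (u + 1) - α u) (β v - β (v - 1)) =
        -(det2 (α (u + 1) - α u) (β (v - 1) - β v)) from by
      simp only [det2, Prod.fst_sub, Prod.snd_sub]; ring, h0, neg_zero]
  -- cone sign conditions
  have F1 : det2 (β v - α u) (β (v + 1) - β v) *
      det2 (β v - α u) (β (v - 1) - β v) < 0 :=
    cone_neg (α u) (β (v - 1)) (β (v + 1)) (β v) (hG1 u v).1 (hG1 u v).2
  have F2' : det2 (α u - β v) (α (u + 1) - α u) *
      det2 (α u - β v) (α (u - 1) - α u) < 0 :=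
    cone_neg (β v) (α (u - 1)) (α (u + 1)) (α u) (hG2 u v).1 (hG2 u v).2
  have F2 : det2 (β v - α u) (α (u + 1) - α u) *
      det2 (β v - α u) (α (u - 1) - α u) < 0 := by
    have : det2 (β v - α u) (α (u + 1) - α u) *
        det2 (β v - α u) (α (u - 1) - α u) =
        det2 (α u - β v) (α (u + 1) - α u) *
        det2 (α u - β v) (α (u - 1) - α u) := by
      simp only [det2, Prod.fst_sub, Prod.snd_sub]; ring
    rw [this]; exact F2'
  -- not all four determinants have the same sign
  have notall : ¬(0 < det2 (α (u + 1) - α u) (β (v + 1) - β v) *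
        det2 (α (u + 1) - α u) (β (v - 1) - β v) ∧
      0 < det2 (α (u + 1) - α u) (β (v + 1) - β v) *
        det2 (α (u - 1) - α u) (β (v + 1) - β v) ∧
      0 < det2 (α (u + 1) - α u) (β (v - 1) - β v) *
        det2 (α (u - 1) - α u) (β (v - 1) - β v)) := by
    rintro ⟨hpq, hpr, hqs⟩
    refine keylemma
      (det2 (α (u + 1) - α u) (β (v + 1) - β v))
      (det2 (α (u + 1) - α u) (β (v - 1) - β v))
      (det2 (α (u - 1) - α u) (β (v + 1) - β v))
      (det2 (α (u - 1) - α u) (β (v - 1) - β v))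
      (det2 (β v - α u) (α (u + 1) - α u))
      (det2 (β v - α u) (α (u - 1) - α u))
      (det2 (β v - α u) (β (v + 1) - β v))
      (det2 (β v - α u) (β (v - 1) - β v))
      (det2 (α (u + 1) - α u) (α (u - 1) - α u))
      ?_ ?_ F1 F2 hpq hpr hqs h
    · simp only [det2, Prod.fst_sub, Prod.snd_sub]; ring
    · simp only [det2, Prod.fst_sub, Prod.snd_sub]; ring
  -- trichotomy
  have H := tri _ _ _ _ hp hq h notall
  -- conversion identities between the dp-propositions and the products
  have e2 : det2 (β (v + 1) - β v) (α (u + 1) - α u) *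
      det2 (β (v + 1) - β v) (α (u - 1) - α u) =
      det2 (α (u + 1) - α u) (β (v + 1) - β v) *
      det2 (α (u - 1) - α u) (β (v + 1) - β v) := by
    simp only [det2, Prod.fst_sub, Prod.snd_sub]; ring
  have e3 : det2 (β (v - 1 + 1) - β (v - 1)) (α (u + 1) - α u) *
      det2 (β (v - 1 + 1) - β (v - 1)) (α (u - 1) - α u) =
      det2 (α (u + 1) - α u) (β (v - 1) - β v) *
      det2 (α (u - 1) - α u) (β (v - 1) - β v) := by
    rw [hv1]
    simp only [det2, Prod.fst_sub, Prod.snd_sub]; ring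
  rcases H with ⟨h1, h2, h3⟩ | ⟨h1, h2, h3⟩ | ⟨h1, h2, h3⟩
  · refine Or.inl ⟨h1, ?_, ?_⟩
    · intro hc; simp only [dpBA] at hc; rw [e2] at hc; exact h2 hc
    · intro hc; simp only [dpBA] at hc; rw [e3] at hc; exact h3 hc
  · refine Or.inr (Or.inl ⟨h1, ?_, ?_⟩)
    · simp only [dpBA]; rw [e2]; exact h2
    · intro hc; simp only [dpBA] at hc; rw [e3] at hc; exact h3 hc
  · refine Or.inr (Or.inr ⟨h1, ?_, ?_⟩)
    · intro hc; simp only [dpBA] at hc; rw [e2] at hc; exact h2 hc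
    · simp only [dpBA]; rw [e3]; exact h3
end
end

section
/- Let α, β : ℤ → ℝ² satisfy the genericity assumptions (G1), (G2), (G3), and let x(u,v) = ½(α(u) + β(v)). Then for every vertex (u,v) ∈ ℤ², the number of the four star edges at x(u,v) — namely the segments [x(u−1,v), x(u,v)], [x(u,v), x(u+1,v)], [x(u,v−1), x(u,v)], [x(u,v), x(u,v+1)] — that belong to the DMPTL is either 0 or 2. -/
noncomputable section

lemma aux_count {P1 P2 P3 P4 : Prop} [Decidable P1] [Decidable P2] [Decidable P3] [Decidable P4]
    {a b c d s t s' t' : ℝ} (hs : 0 < s) (ht : 0 < t) (hs' : 0 < s') (ht' : 0 < t')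
    (ha : a ≠ 0) (hb : b ≠ 0) (hc : c ≠ 0) (hd : d ≠ 0)
    (key : t * t' * a - s * t' * b - t * s' * c + s * s' * d = 0)
    (e1 : P1 ↔ c * d < 0) (e2 : P2 ↔ a * b < 0) (e3 : P3 ↔ b * d < 0) (e4 : P4 ↔ a * c < 0) :
    ((if P1 then 1 else 0) + (if P2 then 1 else 0) + (if P3 then 1 else 0)
      + (if P4 then 1 else 0) : ℕ) = 0 ∨
    ((if P1 then 1 else 0) + (if P2 then 1 else 0) + (if P3 then 1 else 0)
      + (if P4 then 1 else 0) : ℕ) = 2 := by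
  simp only [e1, e2, e3, e4]
  rcases (mul_ne_zero hc hd).lt_or_gt with h1 | h1 <;>
  rcases (mul_ne_zero ha hb).lt_or_gt with h2 | h2 <;>
  rcases (mul_ne_zero hb hd).lt_or_gt with h3 | h3 <;>
  rcases (mul_ne_zero ha hc).lt_or_gt with h4 | h4
  · -- all four negative: contradiction via key
    exfalso
    have hb2 : 0 < b * b := mul_self_pos.mpr hb
    have had : 0 < a * d := by nlinarith [mul_pos_of_neg_of_neg h2 h3, hb2]
    have ha2 : 0 < a * a := mul_self_pos.mpr ha
    have key2 : t * t' * (a * a) - s * t' * (a * b) - t * s' * (a * c) + s * s' * (a * d) = 0 := by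
      linear_combination a * key
    nlinarith [key2, mul_pos (mul_pos ht ht') ha2, mul_pos (mul_pos hs ht') (neg_pos.mpr h2),
      mul_pos (mul_pos ht hs') (neg_pos.mpr h4), mul_pos (mul_pos hs hs') had]
  · exfalso
    nlinarith [mul_pos (mul_pos_of_neg_of_neg h1 h2) h4, h3, sq_nonneg (a * b * c * d)]
  · exfalso
    nlinarith [mul_pos (mul_pos_of_neg_of_neg h1 h2) h3, h4, sq_nonneg (a * b * c * d)]
  · norm_num [h1, h2, asymm h3, asymm h4]
  · exfalso
    nlinarith [mul_pos (mul_pos_of_neg_of_neg h3 h4) h2, h1, sq_nonneg (a * b * c * d)]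
  · norm_num [h1, asymm h2, h3, asymm h4]
  · norm_num [h1, asymm h2, asymm h3, h4]
  · exfalso
    nlinarith [mul_pos (mul_pos h2 h3) h4, h1, sq_nonneg (a * b * c * d)]
  · exfalso
    nlinarith [mul_pos (mul_pos_of_neg_of_neg h2 h3) h1, h4, sq_nonneg (a * b * c * d)]
  · norm_num [asymm h1, h2, h3, asymm h4]
  · norm_num [asymm h1, h2, asymm h3, h4]
  · exfalso
    nlinarith [mul_pos (mul_pos h1 h3) h4, h2, sq_nonneg (a * b * c * d)]
  · norm_num [asymm h1, asymm h2, h3, h4]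
  · exfalso
    nlinarith [mul_pos (mul_pos h1 h2) h4, h3, sq_nonneg (a * b * c * d)]
  · exfalso
    nlinarith [mul_pos (mul_pos h1 h2) h3, h4, sq_nonneg (a * b * c * d)]
  · norm_num [asymm h1, asymm h2, asymm h3, asymm h4]

open Classical in
/-- at every vertex of the planar net, the number of star edges
belonging to the DMPTL is either 0 or 2. -/
theorem stmt10 (α β : ℤ → R2) (hG1 : G1 α β) (hG2 : G2 α β) (hG3 : G3 α β) :
    ∀ u v : ℤ,
      (Finset.univ.filter fun i : Fin 4 =>
        ![dpAB α β (u - 1) v, dpAB α β u v,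
          dpBA α β u (v - 1), dpBA α β u v] i).card = 0 ∨
      (Finset.univ.filter fun i : Fin 4 =>
        ![dpAB α β (u - 1) v, dpAB α β u v,
          dpBA α β u (v - 1), dpBA α β u v] i).card = 2 := by
  intro u v
  obtain ⟨-, s, t, hs, ht, h1⟩ := hG1 u v
  obtain ⟨-, s', t', hs', ht', h2⟩ := hG2 u v
  set a := det2 (α (u + 1) - α u) (β (v + 1) - β v) with ha_def
  set b := det2 (α (u + 1) - α u) (β v - β (v - 1)) with hb_def
  set c := det2 (α u - α (u - 1)) (β (v + 1) - β v) with hc_def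
  set d := det2 (α u - α (u - 1)) (β v - β (v - 1)) with hd_def
  have ha : a ≠ 0 := by rw [ha_def]; exact hG3 u v
  have hb : b ≠ 0 := by
    have := hG3 u (v - 1); rw [show v - 1 + 1 = v by ring] at this; rw [hb_def]; exact this
  have hc : c ≠ 0 := by
    have := hG3 (u - 1) v; rw [show u - 1 + 1 = u by ring] at this; rw [hc_def]; exact this
  have hd : d ≠ 0 := by
    have := hG3 (u - 1) (v - 1)
    rw [show u - 1 + 1 = u by ring, show v - 1 + 1 = v by ring] at this
    rw [hd_def]; exact this
  have hv1 : s • (β v - β (v - 1)) - t • (β (v + 1) - β v) = (s + t - 1) • (β v - α u) := by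
    linear_combination (norm := module) h1
  have hv2 : s' • (α u - α (u - 1)) - t' • (α (u + 1) - α u) = (s' + t' - 1) • (α u - β v) := by
    linear_combination (norm := module) h2
  have key : t * t' * a - s * t' * b - t * s' * c + s * s' * d = 0 := by
    have h0 : det2 (s • (β v - β (v - 1)) - t • (β (v + 1) - β v))
        (s' • (α u - α (u - 1)) - t' • (α (u + 1) - α u)) = 0 := by
      rw [hv1, hv2]
      simp only [det2, Prod.smul_fst, Prod.smul_snd, Prod.fst_sub, Prod.snd_sub, smul_eq_mul]
      ring
    simp only [det2, Prod.smul_fst, Prod.smul_snd, Prod.fst_sub, Prod.snd_sub, smul_eq_mul] at h0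
    rw [ha_def, hb_def, hc_def, hd_def]
    simp only [det2, Prod.fst_sub, Prod.snd_sub]
    linear_combination -h0
  have hP1 : dpAB α β (u - 1) v ↔ c * d < 0 := by
    unfold dpAB
    rw [show u - 1 + 1 = u by ring, hc_def, hd_def,
      show det2 (α u - α (u - 1)) (β (v - 1) - β v)
          = -(det2 (α u - α (u - 1)) (β v - β (v - 1))) from by
        simp only [det2, Prod.fst_sub, Prod.snd_sub]; ring,
      mul_neg, neg_pos]
  have hP2 : dpAB α β u v ↔ a * b < 0 := by
    unfold dpAB
    rw [ha_def, hb_def,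
      show det2 (α (u + 1) - α u) (β (v - 1) - β v)
          = -(det2 (α (u + 1) - α u) (β v - β (v - 1))) from by
        simp only [det2, Prod.fst_sub, Prod.snd_sub]; ring,
      mul_neg, neg_pos]
  have hP3 : dpBA α β u (v - 1) ↔ b * d < 0 := by
    unfold dpBA
    rw [show v - 1 + 1 = v by ring, hb_def, hd_def,
      show det2 (β v - β (v - 1)) (α (u + 1) - α u) * det2 (β v - β (v - 1)) (α (u - 1) - α u)
          = -(det2 (α (u + 1) - α u) (β v - β (v - 1))
              * det2 (α u - α (u - 1)) (β v - β (v - 1))) from by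
        simp only [det2, Prod.fst_sub, Prod.snd_sub]; ring,
      neg_pos]
  have hP4 : dpBA α β u v ↔ a * c < 0 := by
    unfold dpBA
    rw [ha_def, hc_def,
      show det2 (β (v + 1) - β v) (α (u + 1) - α u) * det2 (β (v + 1) - β v) (α (u - 1) - α u)
          = -(det2 (α (u + 1) - α u) (β (v + 1) - β v)
              * det2 (α u - α (u - 1)) (β (v + 1) - β v)) from by
        simp only [det2, Prod.fst_sub, Prod.snd_sub]; ring,
      neg_pos]
  simp only [Finset.card_filter, Fin.sum_univ_four, Matrix.cons_val_zero, Matrix.cons_val_one,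
    Matrix.head_cons, Matrix.cons_val_two, Matrix.tail_cons, Matrix.cons_val_three]
  exact aux_count hs ht hs' ht' ha hb hc hd key hP1 hP2 hP3 hP4
end
end

section
/- Let q : ℤ² → ℝ³ and let α, β, a, b, c, d be nonzero real numbers with q(0,0) = (0,0,0), q(1,0) = (0,β,0), q(−1,0) = (α,0,0), q(0,1) = (a,b,0), q(0,−1) = (c,d,0). Assume that the first two coordinates of q₁₂(u,v) vanish for each (u,v) ∈ {−1,0}×{−1,0}, and that each of the following quadruples of points of ℝ³ is coplanar (lies in a common affine plane): {q(1,0), q(0,0), q(1,1), q(1,−1)}, {q(0,1), q(0,0), q(1,1), q(−1,1)}, {q(−1,0), q(0,0), q(−1,1), q(−1,−1)}, {q(0,−1), q(0,0), q(1,−1), q(−1,−1)}. Writing z(u,v) for the third coordinate of q(u,v), one has: β·a·z(−1,1) = −α·b·z(1,1), β·a·z(−1,−1) = −α·d·z(1,1), and a·z(1,−1) = c·z(1,1). -/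
noncomputable section

lemma dep_det3 (v0 v1 v2 : R3) (h : ¬ LinearIndependent ℝ ![v0, v1, v2]) :
    det3 v0 v1 v2 = 0 := by
  rw [Fintype.not_linearIndependent_iff] at h
  obtain ⟨g, hg, i, hi⟩ := h
  simp only [Fin.sum_univ_three, Matrix.cons_val_zero, Matrix.cons_val_one, Matrix.head_cons,
    Matrix.cons_val_two, Matrix.tail_cons] at hg
  have hx : g 0 * v0.1 + g 1 * v1.1 + g 2 * v2.1 = 0 := by
    have := congrArg Prod.fst hg
    simpa [Prod.fst_add] using this
  have hy : g 0 * v0.2.1 + g 1 * v1.2.1 + g 2 * v2.2.1 = 0 := by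
    have := congrArg (fun p : R3 => p.2.1) hg
    simpa using this
  have hz : g 0 * v0.2.2 + g 1 * v1.2.2 + g 2 * v2.2.2 = 0 := by
    have := congrArg (fun p : R3 => p.2.2) hg
    simpa using this
  fin_cases i
  · have : g 0 * det3 v0 v1 v2 = 0 := by
      simp only [det3]
      linear_combination (v1.2.1 * v2.2.2 - v1.2.2 * v2.2.1) * hx
        - (v1.1 * v2.2.2 - v1.2.2 * v2.1) * hy + (v1.1 * v2.2.1 - v1.2.1 * v2.1) * hz
    exact (mul_eq_zero.1 this).resolve_left hi
  · have : g 1 * det3 v0 v1 v2 = 0 := by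
      simp only [det3]
      linear_combination (-(v0.2.1 * v2.2.2 - v0.2.2 * v2.2.1)) * hx
        + (v0.1 * v2.2.2 - v0.2.2 * v2.1) * hy + (v2.1 * v0.2.1 - v0.1 * v2.2.1) * hz
    exact (mul_eq_zero.1 this).resolve_left hi
  · have : g 2 * det3 v0 v1 v2 = 0 := by
      simp only [det3]
      linear_combination (v0.2.1 * v1.2.2 - v0.2.2 * v1.2.1) * hx
        + (v1.1 * v0.2.2 - v0.1 * v1.2.2) * hy + (v0.1 * v1.2.1 - v1.1 * v0.2.1) * hz
    exact (mul_eq_zero.1 this).resolve_left hi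

/-- the model-net lemma relating the heights of the diagonal
neighbours of a vertex. -/
theorem stmt11 (q : ℤ → ℤ → R3) (α β a b c d : ℝ)
    (hα : α ≠ 0) (hβ : β ≠ 0) (ha : a ≠ 0) (hb : b ≠ 0) (hc : c ≠ 0) (hd : d ≠ 0)
    (h00 : q 0 0 = ((0 : ℝ), (0 : ℝ), (0 : ℝ)))
    (h10 : q 1 0 = ((0 : ℝ), β, (0 : ℝ)))
    (hm10 : q (-1) 0 = (α, (0 : ℝ), (0 : ℝ)))
    (h01 : q 0 1 = (a, b, (0 : ℝ)))
    (h0m1 : q 0 (-1) = (c, d, (0 : ℝ)))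
    (h12 : ∀ u v : ℤ, (u = -1 ∨ u = 0) → (v = -1 ∨ v = 0) →
      (D12 q u v).1 = 0 ∧ (D12 q u v).2.1 = 0)
    (hcop1 : ¬ LinearIndependent ℝ
      ![q 0 0 - q 1 0, q 1 1 - q 1 0, q 1 (-1) - q 1 0])
    (hcop2 : ¬ LinearIndependent ℝ
      ![q 0 0 - q 0 1, q 1 1 - q 0 1, q (-1) 1 - q 0 1])
    (hcop3 : ¬ LinearIndependent ℝ
      ![q 0 0 - q (-1) 0, q (-1) 1 - q (-1) 0, q (-1) (-1) - q (-1) 0])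
    (hcop4 : ¬ LinearIndependent ℝ
      ![q 0 0 - q 0 (-1), q 1 (-1) - q 0 (-1), q (-1) (-1) - q 0 (-1)]) :
    β * a * (q (-1) 1).2.2 = -(α * b * (q 1 1).2.2) ∧
    β * a * (q (-1) (-1)).2.2 = -(α * d * (q 1 1).2.2) ∧
    a * (q 1 (-1)).2.2 = c * (q 1 1).2.2 := by
  -- corner coordinates
  have hq11 : q 1 1 = (a, β + b, (q 1 1).2.2) := by
    have e1 := h12 0 0 (Or.inr rfl) (Or.inr rfl)
    simp only [D12] at e1
    norm_num [h00, h10, h01, Prod.fst_sub, Prod.fst_add, Prod.snd_sub, Prod.snd_add] at e1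
    refine Prod.ext ?_ (Prod.ext ?_ rfl)
    · simp; linarith [e1.1]
    · simp; linarith [e1.2]
  have hqm11 : q (-1) 1 = (a + α, b, (q (-1) 1).2.2) := by
    have e1 := h12 (-1) 0 (Or.inl rfl) (Or.inr rfl)
    simp only [D12] at e1
    norm_num [h00, hm10, h01, Prod.fst_sub, Prod.fst_add, Prod.snd_sub, Prod.snd_add] at e1
    refine Prod.ext ?_ (Prod.ext ?_ rfl)
    · simp; linarith [e1.1]
    · simp; linarith [e1.2]
  have hq1m1 : q 1 (-1) = (c, β + d, (q 1 (-1)).2.2) := by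
    have e1 := h12 0 (-1) (Or.inr rfl) (Or.inl rfl)
    simp only [D12] at e1
    norm_num [h00, h10, h0m1, Prod.fst_sub, Prod.fst_add, Prod.snd_sub, Prod.snd_add] at e1
    refine Prod.ext ?_ (Prod.ext ?_ rfl)
    · simp; linarith [e1.1]
    · simp; linarith [e1.2]
  have hqm1m1 : q (-1) (-1) = (c + α, d, (q (-1) (-1)).2.2) := by
    have e1 := h12 (-1) (-1) (Or.inl rfl) (Or.inl rfl)
    simp only [D12] at e1
    norm_num [h00, hm10, h0m1, Prod.fst_sub, Prod.fst_add, Prod.snd_sub, Prod.snd_add] at e1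
    refine Prod.ext ?_ (Prod.ext ?_ rfl)
    · simp; linarith [e1.1]
    · simp; linarith [e1.2]
  set z1 := (q 1 1).2.2 with hz1
  set z2 := (q (-1) 1).2.2 with hz2
  set z3 := (q (-1) (-1)).2.2 with hz3
  set z4 := (q 1 (-1)).2.2 with hz4
  have hd1 := dep_det3 _ _ _ hcop1
  have hd2 := dep_det3 _ _ _ hcop2
  have hd3 := dep_det3 _ _ _ hcop3
  have hd4 := dep_det3 _ _ _ hcop4
  rw [h00, h10, hq11, hq1m1] at hd1
  rw [h00, h01, hq11, hqm11] at hd2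
  rw [h00, hm10, hqm11, hqm1m1] at hd3
  rw [h00, h0m1, hq1m1, hqm1m1] at hd4
  simp only [det3, Prod.mk_sub_mk] at hd1 hd2 hd3 hd4
  have k1 : a * z4 = c * z1 := by
    have h : β * (a * z4 - c * z1) = 0 := by linear_combination hd1
    have := (mul_eq_zero.1 h).resolve_left hβ
    linarith
  have k2 : β * a * z2 = -(α * b * z1) := by linear_combination -hd2
  have k3 : b * z3 = d * z2 := by
    have h : α * (d * z2 - b * z3) = 0 := by linear_combination hd3
    have := (mul_eq_zero.1 h).resolve_left hα
    linarith
  have k4 : β * a * z3 = -(α * d * z1) := by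
    have h : b * (β * a * z3 + α * d * z1) = 0 := by
      linear_combination (β * a) * k3 + d * k2
    have := (mul_eq_zero.1 h).resolve_left hb
    linarith
  exact ⟨k2, k4, k1⟩
end
end

section
/- Let α : ℤ → ℝ², written α(u) = (α¹(u), α²(u)), satisfy α¹(u+1) > α¹(u) for all u ∈ ℤ, and let β(v) = (0, v) for v ∈ ℤ. Let q(u,v) = (x(u,v), z(u,v)) be a centre-chord net of (α,β), with x(u,v) = (x¹(u,v), x²(u,v)). Then there exists a function φ : ℝ → ℝ such that z(u,v) = x¹(u,v)·x²(u,v) + φ(x¹(u,v)) for all (u,v) ∈ ℤ². -/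
noncomputable section

/-- The ruling line `β(v) = (0, v)`. -/
def betaLine : ℤ → R2 := fun v => ((0 : ℝ), (v : ℝ))

/-! Along a ruling `u = const`, each step in `v` moves `x` by `(0, ½)` and changes `z` by
`¼ α¹(u) = ½ x¹`, exactly as it changes `x¹x²`; so `z - x¹x²` depends on `u` only, hence on
`x¹ = ½ α¹(u)`, which is injective in `u`. -/

theorem xcc_betaLine_fst (α : ℤ → R2) (u v : ℤ) : (xcc α betaLine u v).1 = (α u).1 / 2 := by
  simp [xcc, betaLine, div_eq_inv_mul]

theorem IsCentreChordZ.periodic_sub_fst_mul_snd {α : ℤ → R2} {z : ℤ → ℤ → ℝ}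
    (hz : IsCentreChordZ α betaLine z) (u : ℤ) :
    Function.Periodic
      (fun v => z u v - (xcc α betaLine u v).1 * (xcc α betaLine u v).2) 1 := by
  intro v
  have hstep := (hz u v).2
  simp only [xcc, ycc, betaLine, det2, Prod.smul_def, Prod.fst_add, Prod.snd_add,
    Prod.fst_sub, Prod.snd_sub, smul_eq_mul, Int.cast_add, Int.cast_one] at hstep ⊢
  linarith

theorem IsCentreChordZ.sub_fst_mul_snd_eq {α : ℤ → R2} {z : ℤ → ℤ → ℝ}
    (hz : IsCentreChordZ α betaLine z) (u v : ℤ) :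
    z u v - (xcc α betaLine u v).1 * (xcc α betaLine u v).2
      = z u 0 - (xcc α betaLine u 0).1 * (xcc α betaLine u 0).2 := by
  simpa using (hz.periodic_sub_fst_mul_snd u).int_mul_eq v

/-- a ruled DIIAS without singularities is the graph of
`z = x¹x² + φ(x¹)`. -/
theorem stmt12 (α : ℤ → R2) (z : ℤ → ℤ → ℝ)
    (hmono : ∀ u : ℤ, (α u).1 < (α (u + 1)).1)
    (hz : IsCentreChordZ α betaLine z) :
    ∃ φ : ℝ → ℝ, ∀ u v : ℤ,
      z u v = (xcc α betaLine u v).1 * (xcc α betaLine u v).2 +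
        φ ((xcc α betaLine u v).1) := by
  let x₁ : ℤ → ℝ := fun u => (α u).1 / 2
  have hinj : Function.Injective x₁ :=
    (strictMono_int_of_lt_succ fun u => div_lt_div_of_pos_right (hmono u) two_pos).injective
  let g : ℤ → ℝ := fun u => z u 0 - (xcc α betaLine u 0).1 * (xcc α betaLine u 0).2
  refine ⟨Function.extend x₁ g 0, fun u v => ?_⟩
  have hx₁ : (xcc α betaLine u v).1 = x₁ u := xcc_betaLine_fst α u v
  rw [hx₁, hinj.extend_apply, ← hx₁]
  linarith [hz.sub_fst_mul_snd_eq u v]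
end
end

section
/- Let a ∈ ℝ and let q : ℤ² → ℝ³ satisfy, for all (u,v) ∈ ℤ²: q₁₁(u,v) = a·q₂(u,v), q₂₂(u,v) = 0, q₁₂(u,v) = (0,0,1), together with the initial conditions q(0,0) = (0,0,0), q(0,1) = (0,1,0), q(1,0) = (1,0,0). Then q(u,v) = (u, v + a·u(u−1)/2, u·v + a·u(u²−1)/6) for all (u,v) ∈ ℤ² (the discrete Cayley surface). -/
noncomputable section

/-!
The equations are linear in `q` and the Cayley net is a solution with the same initial values,
so it suffices to show that a solution `r` of the homogeneous system with zero initial values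
vanishes. There `r₂₂ = 0` and `r₁₂ = 0` make `r₂` constant, hence zero; then `r₁₁ = a • r₂ = 0`
makes `r₁(·, 0)` constant, hence zero, and `r(u, v) = r(u, 0) = r(0, 0) = 0`.
-/

lemma Function.Periodic.int_eq {M : Type*} {f : ℤ → M} (h : Function.Periodic f 1) (n : ℤ) :
    f n = f 0 := by
  simpa using h.int_mul_eq n

section DiscreteDerivatives

variable (q p : ℤ → ℤ → R3) (u v : ℤ)

lemma D11_add_one : D11 q (u + 1) v = D1 q (u + 1) v - D1 q u v := by
  simp only [D11, D1, add_sub_cancel_right, two_smul]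
  abel

lemma D22_add_one : D22 q u (v + 1) = D2 q u (v + 1) - D2 q u v := by
  simp only [D22, D2, add_sub_cancel_right, two_smul]
  abel

lemma D12_eq_sub : D12 q u v = D2 q (u + 1) v - D2 q u v := by
  simp only [D12, D2]
  abel

lemma D2_sub : D2 (q - p) u v = D2 q u v - D2 p u v := by
  simp only [D2, Pi.sub_apply]
  abel

lemma D11_sub : D11 (q - p) u v = D11 q u v - D11 p u v := by
  simp only [D11, Pi.sub_apply, smul_sub]
  abel

lemma D22_sub : D22 (q - p) u v = D22 q u v - D22 p u v := by
  simp only [D22, Pi.sub_apply, smul_sub]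
  abel

lemma D12_sub : D12 (q - p) u v = D12 q u v - D12 p u v := by
  simp only [D12, Pi.sub_apply]
  abel

end DiscreteDerivatives

theorem eq_zero_of_D11_D22_D12 {a : ℝ} {r : ℤ → ℤ → R3}
    (h11 : ∀ u v, D11 r u v = a • D2 r u v) (h22 : ∀ u v, D22 r u v = 0)
    (h12 : ∀ u v, D12 r u v = 0) (i00 : r 0 0 = 0) (i01 : r 0 1 = 0) (i10 : r 1 0 = 0) :
    r = 0 := by
  have hD2 : ∀ u v, D2 r u v = 0 := by
    have along_v (u : ℤ) : Function.Periodic (D2 r u) 1 := fun v =>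
      sub_eq_zero.mp ((D22_add_one r u v).symm.trans (h22 u (v + 1)))
    have along_u : Function.Periodic (fun u => D2 r u 0) 1 := fun u =>
      sub_eq_zero.mp ((D12_eq_sub r u 0).symm.trans (h12 u 0))
    intro u v
    rw [(along_v u).int_eq, along_u.int_eq u]
    simp [D2, i00, i01]
  have hD1 : Function.Periodic (fun u => D1 r u 0) 1 := fun u =>
    sub_eq_zero.mp ((D11_add_one r u 0).symm.trans (by rw [h11, hD2, smul_zero]))
  have hrow : Function.Periodic (fun u => r u 0) 1 := fun u => by
    have := hD1.int_eq u
    simp only [D1, zero_add, i00, i10, sub_zero] at this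
    exact sub_eq_zero.mp this
  have hcol (u : ℤ) : Function.Periodic (r u) 1 := fun v => sub_eq_zero.mp (hD2 u v)
  ext1 u; ext1 v
  rw [(hcol u).int_eq, hrow.int_eq u, i00]
  rfl

def cayleyNet (a : ℝ) (u v : ℤ) : R3 :=
  ((u : ℝ), (v : ℝ) + a * (u : ℝ) * ((u : ℝ) - 1) / 2,
    (u : ℝ) * (v : ℝ) + a * (u : ℝ) * ((u : ℝ) ^ 2 - 1) / 6)

section CayleyNet

variable (a : ℝ) (u v : ℤ)

lemma D2_cayleyNet : D2 (cayleyNet a) u v = ((0 : ℝ), (1 : ℝ), (u : ℝ)) := by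
  simp only [D2, cayleyNet, Prod.mk_sub_mk, Int.cast_add, Int.cast_one]
  ext <;> ring

lemma D11_cayleyNet : D11 (cayleyNet a) u v = a • D2 (cayleyNet a) u v := by
  rw [D2_cayleyNet]
  simp only [D11, cayleyNet, Prod.smul_mk, Prod.mk_sub_mk, Prod.mk_add_mk, smul_eq_mul,
    Int.cast_add, Int.cast_sub, Int.cast_one]
  ext <;> ring

lemma D22_cayleyNet : D22 (cayleyNet a) u v = 0 := by
  simp only [D22, cayleyNet, Prod.smul_mk, Prod.mk_sub_mk, Prod.mk_add_mk, smul_eq_mul,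
    Int.cast_add, Int.cast_sub, Int.cast_one]
  ext <;> simp <;> ring

lemma D12_cayleyNet : D12 (cayleyNet a) u v = e3 := by
  simp only [D12, cayleyNet, e3, Prod.mk_sub_mk, Prod.mk_add_mk, Int.cast_add, Int.cast_one]
  ext <;> ring

end CayleyNet

/-- the discrete Cayley surface. -/
theorem stmt13 (a : ℝ) (q : ℤ → ℤ → R3)
    (h11 : ∀ u v : ℤ, D11 q u v = a • D2 q u v)
    (h22 : ∀ u v : ℤ, D22 q u v = 0)
    (h12 : ∀ u v : ℤ, D12 q u v = e3)
    (i00 : q 0 0 = ((0 : ℝ), (0 : ℝ), (0 : ℝ)))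
    (i01 : q 0 1 = ((0 : ℝ), (1 : ℝ), (0 : ℝ)))
    (i10 : q 1 0 = ((1 : ℝ), (0 : ℝ), (0 : ℝ))) :
    ∀ u v : ℤ,
      q u v = ((u : ℝ), (v : ℝ) + a * (u : ℝ) * ((u : ℝ) - 1) / 2,
        (u : ℝ) * (v : ℝ) + a * (u : ℝ) * ((u : ℝ) ^ 2 - 1) / 6) := by
  have h : q - cayleyNet a = 0 := eq_zero_of_D11_D22_D12 (a := a)
    (fun u v => by rw [D11_sub, D2_sub, h11, D11_cayleyNet, smul_sub])
    (fun u v => by rw [D22_sub, h22, D22_cayleyNet, sub_zero])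
    (fun u v => by rw [D12_sub, h12, D12_cayleyNet, sub_self])
    (by simp [i00, cayleyNet]) (by simp [i01, cayleyNet]) (by simp [i10, cayleyNet])
  intro u v
  exact sub_eq_zero.mp (congrFun (congrFun h u) v)
end
end

section
/- Let q : ℤ² → ℝ³ be a normalized DIIAS, i.e., for all (u,v): q₁₂(u,v) = (0,0,1), [q₁(u,v), q₂(u,v), (0,0,1)] = 1, q₂₂(u,v) = 0, and q₁₁(u,v) lies in the linear span of q₁(u,v) and q₂(u,v). Define A(u,v) = [q₁(u−1,v), q₁(u,v), (0,0,1)]. Then the following are equivalent: (i) there exist a real number a ≠ 0 and an invertible affine transformation T of ℝ³ such that T(q(u,v)) = (u, v + a·u(u−1)/2, u·v + a·u(u²−1)/6) for all (u,v) ∈ ℤ² (q is affinely congruent to a discrete Cayley surface); (ii) A is a nonzero constant, i.e., A(u,v) ≠ 0 and A(u+1,v) = A(u,v) for all (u,v). -/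
noncomputable section

/-!
Write `ξ = e3`. From `q₁₂ = ξ` and `q₂₂ = 0`, `q₂(u,v) = q₂(0,0) + u ξ` and
`q₁(u,v+1) = q₁(u,v) + ξ`, while `q₁₁` does not depend on `v`. Hence `q₁₁(u,v)` lies in both
`span{q₁, q₂}` and `span{q₁ + ξ, q₂}`; as `[q₁, q₂, ξ] = 1` it is a multiple of `q₂` alone, and
the multiple is `A`: the structure equation `q₁₁ = A q₂`. The Cayley surface satisfies
`q₁₁ = a q₂`, and this equation is preserved by affine maps, so `A = a` for its affine
images. Conversely, for `A ≡ a` the difference equations integrate to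
`q = q(0,0) + u g + (v + a u(u-1)/2) r + (uv + a u(u²-1)/6) ξ` with `g = q₁(0,0)`,
`r = q₂(0,0)`, i.e. `q` is the Cayley surface written in the affine frame `(q(0,0); g, r, ξ)`.
-/

theorem sub_eq_sub_zero_of_forall_sub_eq {M : Type*} [AddCommGroup M] {f g : ℤ → M}
    (h : ∀ n, f (n + 1) - f n = g (n + 1) - g n) (n : ℤ) : f n - g n = f 0 - g 0 := by
  have hper : Function.Periodic (fun n => f n - g n) 1 := fun n =>
    sub_eq_sub_iff_sub_eq_sub.mpr (h n)
  simpa using hper.int_mul_eq n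

theorem sub_eq_sub_zero_zero_of_forall_sub_eq {M : Type*} [AddCommGroup M] {f g : ℤ → ℤ → M}
    (h₁ : ∀ u, f (u + 1) 0 - f u 0 = g (u + 1) 0 - g u 0)
    (h₂ : ∀ u v, f u (v + 1) - f u v = g u (v + 1) - g u v) (u v : ℤ) :
    f u v - g u v = f 0 0 - g 0 0 :=
  (sub_eq_sub_zero_of_forall_sub_eq (h₂ u) v).trans
    (sub_eq_sub_zero_of_forall_sub_eq (f := fun u => f u 0) (g := fun u => g u 0) h₁ u)

theorem det3_e3 (a b : R3) : det3 a b e3 = a.1 * b.2.1 - a.2.1 * b.1 := by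
  simp only [det3, e3]
  ring

theorem eq_det3_div_smul_of_mem_span_pair {a b c : R3} (hab : det3 a b e3 ≠ 0)
    (h₀ : c ∈ Submodule.span ℝ {a, b}) (h₁ : c ∈ Submodule.span ℝ {a + e3, b}) :
    c = (det3 a c e3 / det3 a b e3) • b := by
  obtain ⟨m, n, rfl⟩ := Submodule.mem_span_pair.mp h₀
  obtain ⟨m', n', h⟩ := Submodule.mem_span_pair.mp h₁
  simp only [det3_e3] at hab ⊢
  simp only [Prod.ext_iff, Prod.fst_add, Prod.snd_add, Prod.smul_fst, Prod.smul_snd,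
    smul_eq_mul, e3] at h
  obtain ⟨h1, h2, h3⟩ := h
  have hm : (m - m') * (a.1 * b.2.1 - a.2.1 * b.1) = 0 := by
    linear_combination b.1 * h2 - b.2.1 * h1
  have hn : (n - n') * (a.1 * b.2.1 - a.2.1 * b.1) = 0 := by
    linear_combination a.2.1 * h1 - a.1 * h2
  obtain rfl : m' = m := by linarith [(mul_eq_zero.mp hm).resolve_right hab]
  obtain rfl : n' = n := by linarith [(mul_eq_zero.mp hn).resolve_right hab]
  obtain rfl : m' = 0 := by linarith
  simp only [zero_smul, zero_add, Prod.smul_fst, Prod.smul_snd, smul_eq_mul]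
  rw [show a.1 * (n' * b.2.1) - a.2.1 * (n' * b.1) = n' * (a.1 * b.2.1 - a.2.1 * b.1) by ring,
    mul_div_cancel_right₀ _ hab]

section DiscreteNet

variable (q : ℤ → ℤ → R3) (u v : ℤ)

theorem D11_eq_D1_sub_D1 : D11 q u v = D1 q u v - D1 q (u - 1) v := by
  simp only [D11, D1, sub_add_cancel]
  module

theorem D1_add_one_right : D1 q u (v + 1) = D1 q u v + D12 q u v := by
  simp only [D1, D12]
  abel

theorem D2_add_one_left : D2 q (u + 1) v = D2 q u v + D12 q u v := by
  simp only [D2, D12]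
  abel

theorem D2_add_one_right : D2 q u (v + 1) = D2 q u v + D22 q u (v + 1) := by
  simp only [D2, D22, add_sub_cancel_right]
  module

theorem D11_add_one_right :
    D11 q u (v + 1) = D11 q u v + D12 q u v - D12 q (u - 1) v := by
  rw [D11_eq_D1_sub_D1, D11_eq_D1_sub_D1, D1_add_one_right, D1_add_one_right]
  abel

end DiscreteNet

theorem Acoef_add_one_right {q : ℤ → ℤ → R3} (h12 : ∀ u v, D12 q u v = e3) (u v : ℤ) :
    Acoef q e3 u (v + 1) = Acoef q e3 u v := by
  rw [Acoef, Acoef, D1_add_one_right, D1_add_one_right, h12, h12, det3_e3, det3_e3]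
  simp only [e3, Prod.fst_add, Prod.snd_add]
  ring

theorem D11_eq_Acoef_smul_D2 {q : ℤ → ℤ → R3} (h12 : ∀ u v, D12 q u v = e3)
    (hΩ : ∀ u v, det3 (D1 q u v) (D2 q u v) e3 = 1) (h22 : ∀ u v, D22 q u v = 0)
    (h11 : ∀ u v, D11 q u v ∈ Submodule.span ℝ {D1 q u v, D2 q u v}) (u v : ℤ) :
    D11 q u v = Acoef q e3 u v • D2 q u v := by
  have h₁ := h11 u (v + 1)
  rw [D11_add_one_right, D1_add_one_right, D2_add_one_right, h12, h12, h22, add_sub_cancel_right,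
    add_zero] at h₁
  rw [eq_det3_div_smul_of_mem_span_pair (by rw [hΩ]; norm_num) (h11 u v) h₁, hΩ, div_one]
  congr 1
  simp only [Acoef, D11_eq_D1_sub_D1, det3_e3, Prod.fst_sub, Prod.snd_sub]
  ring

def cayley (a : ℝ) (u v : ℤ) : R3 :=
  ((u : ℝ), (v : ℝ) + a * (u : ℝ) * ((u : ℝ) - 1) / 2,
    (u : ℝ) * (v : ℝ) + a * (u : ℝ) * ((u : ℝ) ^ 2 - 1) / 6)

theorem D2_cayley (a : ℝ) (u v : ℤ) : D2 (cayley a) u v = ((0 : ℝ), (1 : ℝ), (u : ℝ)) := by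
  simp only [D2, cayley, Prod.mk_sub_mk, Prod.mk.injEq]
  push_cast
  refine ⟨?_, ?_, ?_⟩ <;> ring

theorem D11_cayley (a : ℝ) (u v : ℤ) : D11 (cayley a) u v = a • D2 (cayley a) u v := by
  rw [D2_cayley]
  simp only [D11, cayley, Prod.mk_sub_mk, Prod.mk_add_mk, Prod.smul_mk, smul_eq_mul,
    Prod.mk.injEq]
  push_cast
  refine ⟨?_, ?_, ?_⟩ <;> ring

section AffineImage

variable {F : Type*} [FunLike F R3 R3] [LinearMapClass F ℝ R3 R3]
variable (q : ℤ → ℤ → R3) (L : F) (w : R3) (u v : ℤ)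

theorem D2_linearMap_add : D2 (fun u v => L (q u v) + w) u v = L (D2 q u v) := by
  simp only [D2, map_sub]
  abel

theorem D11_linearMap_add : D11 (fun u v => L (q u v) + w) u v = L (D11 q u v) := by
  simp only [D11, map_add, map_sub, map_smul]
  module

end AffineImage

def frameMap (a b : R3) : R3 →ₗ[ℝ] R3 where
  toFun x := x.1 • a + x.2.1 • b + x.2.2 • e3
  map_add' x y := by
    simp only [Prod.fst_add, Prod.snd_add, add_smul]
    abel
  map_smul' c x := by
    simp only [Prod.smul_fst, Prod.smul_snd, smul_eq_mul, mul_smul, RingHom.id_apply, smul_add]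

theorem frameMap_apply (a b x : R3) : frameMap a b x = x.1 • a + x.2.1 • b + x.2.2 • e3 := rfl

theorem frameMap_injective {a b : R3} (hab : det3 a b e3 ≠ 0) :
    Function.Injective (frameMap a b) := by
  rw [← LinearMap.ker_eq_bot, LinearMap.ker_eq_bot']
  rintro ⟨x, y, z⟩ h
  rw [det3_e3] at hab
  simp only [frameMap_apply, e3, Prod.ext_iff, Prod.fst_add, Prod.snd_add, Prod.smul_fst,
    Prod.smul_snd, smul_eq_mul, Prod.fst_zero, Prod.snd_zero] at h
  obtain ⟨h1, h2, h3⟩ := h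
  have hx : x * (a.1 * b.2.1 - a.2.1 * b.1) = 0 := by linear_combination b.2.1 * h1 - b.1 * h2
  have hy : y * (a.1 * b.2.1 - a.2.1 * b.1) = 0 := by linear_combination a.1 * h2 - a.2.1 * h1
  obtain rfl := (mul_eq_zero.mp hx).resolve_right hab
  obtain rfl := (mul_eq_zero.mp hy).resolve_right hab
  simp_all

def frameEquiv {a b : R3} (hab : det3 a b e3 ≠ 0) : R3 ≃ₗ[ℝ] R3 :=
  LinearEquiv.ofBijective (frameMap a b)
    ⟨frameMap_injective hab, LinearMap.injective_iff_surjective.mp (frameMap_injective hab)⟩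

theorem frameEquiv_symm_frameMap {a b : R3} (hab : det3 a b e3 ≠ 0) (x : R3) :
    (frameEquiv hab).symm (frameMap a b x) = x :=
  (frameEquiv hab).symm_apply_apply x

theorem Acoef_eq_of_linearMap_add_eq_cayley {F : Type*} [FunLike F R3 R3]
    [LinearMapClass F ℝ R3 R3] {q : ℤ → ℤ → R3} {a : ℝ}
    (hD11 : ∀ u v, D11 q u v = Acoef q e3 u v • D2 q u v) (L : F) (w : R3)
    (hT : ∀ u v, L (q u v) + w = cayley a u v) (u v : ℤ) : Acoef q e3 u v = a := by
  have hp : (fun u v => L (q u v) + w) = cayley a := funext₂ hT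
  have h : Acoef q e3 u v • D2 (cayley a) u v = a • D2 (cayley a) u v := by
    rw [← D11_cayley, ← hp, D11_linearMap_add, D2_linearMap_add, hD11, map_smul]
  have hne : D2 (cayley a) u v ≠ 0 := by simp [D2_cayley, Prod.ext_iff]
  exact smul_left_injective ℝ hne h

section ClosedForm

variable {q : ℤ → ℤ → R3}

theorem D2_eq_of_D12_of_D22 (h12 : ∀ u v, D12 q u v = e3) (h22 : ∀ u v, D22 q u v = 0)
    (u v : ℤ) : D2 q u v = D2 q 0 0 + (u : ℝ) • e3 := by
  have h := sub_eq_sub_zero_zero_of_forall_sub_eq (f := D2 q) (g := fun u _ => (u : ℝ) • e3)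
    (fun u => by rw [D2_add_one_left, h12]; push_cast; module)
    (fun u v => by rw [D2_add_one_right, h22]; module) u v
  simp only [Int.cast_zero, zero_smul, sub_zero] at h
  rw [← h]
  abel

theorem D1_eq_of_D11_eq_smul {a : ℝ} (h12 : ∀ u v, D12 q u v = e3)
    (hD11 : ∀ u v, D11 q u v = a • D2 q u v) (hD2 : ∀ u v, D2 q u v = D2 q 0 0 + (u : ℝ) • e3)
    (u v : ℤ) :
    D1 q u v = D1 q 0 0 + (a * u) • D2 q 0 0 + (a * u * (u + 1) / 2 + v) • e3 := by
  have h := sub_eq_sub_zero_zero_of_forall_sub_eq (f := D1 q)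
    (g := fun u v => (a * u) • D2 q 0 0 + (a * u * (u + 1) / 2 + v) • e3)
    (fun u => by
      have h := D11_eq_D1_sub_D1 q (u + 1) 0
      rw [add_sub_cancel_right, hD11, hD2] at h
      rw [← h]
      push_cast
      module)
    (fun u v => by rw [D1_add_one_right, h12]; push_cast; module) u v
  simp only [Int.cast_zero, mul_zero, zero_mul, zero_div, zero_add, zero_smul, add_zero,
    sub_zero] at h
  rw [← h]
  abel

theorem eq_add_frameMap_cayley {a : ℝ}
    (hD1 : ∀ u v, D1 q u v = D1 q 0 0 + (a * u) • D2 q 0 0 + (a * u * (u + 1) / 2 + v) • e3)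
    (hD2 : ∀ u v, D2 q u v = D2 q 0 0 + (u : ℝ) • e3) (u v : ℤ) :
    q u v = q 0 0 + frameMap (D1 q 0 0) (D2 q 0 0) (cayley a u v) := by
  have h := sub_eq_sub_zero_zero_of_forall_sub_eq (f := q)
    (g := fun u v => frameMap (D1 q 0 0) (D2 q 0 0) (cayley a u v))
    (fun u => by
      rw [← D1, hD1, ← map_sub]
      simp only [frameMap_apply, cayley, Prod.mk_sub_mk]
      push_cast
      module)
    (fun u v => by
      rw [← D2, hD2, ← map_sub]
      simp only [frameMap_apply, cayley, Prod.mk_sub_mk]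
      push_cast
      module) u v
  have h0 : cayley a 0 0 = 0 := by simp [cayley]
  simp only [h0, map_zero, sub_zero] at h
  rw [← h]
  abel

end ClosedForm

/-- a normalized DIIAS is affinely congruent to a discrete
Cayley surface if and only if `A` is a nonzero constant. -/
theorem stmt14 (q : ℤ → ℤ → R3)
    (h12 : ∀ u v : ℤ, D12 q u v = e3)
    (hΩ : ∀ u v : ℤ, det3 (D1 q u v) (D2 q u v) e3 = 1)
    (h22 : ∀ u v : ℤ, D22 q u v = 0)
    (h11 : ∀ u v : ℤ, D11 q u v ∈ Submodule.span ℝ {D1 q u v, D2 q u v}) :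
    (∃ a : ℝ, a ≠ 0 ∧ ∃ (L : R3 ≃ₗ[ℝ] R3) (w : R3), ∀ u v : ℤ,
        L (q u v) + w = ((u : ℝ), (v : ℝ) + a * (u : ℝ) * ((u : ℝ) - 1) / 2,
          (u : ℝ) * (v : ℝ) + a * (u : ℝ) * ((u : ℝ) ^ 2 - 1) / 6)) ↔
    (∀ u v : ℤ, Acoef q e3 u v ≠ 0 ∧ Acoef q e3 (u + 1) v = Acoef q e3 u v) := by
  have hD11 := D11_eq_Acoef_smul_D2 h12 hΩ h22 h11
  constructor
  · rintro ⟨a, ha, L, w, hT⟩ u v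
    have hA := Acoef_eq_of_linearMap_add_eq_cayley hD11 L w hT
    exact ⟨hA u v ▸ ha, by rw [hA, hA]⟩
  · intro hA
    set a := Acoef q e3 0 0
    have hAa : ∀ u v, Acoef q e3 u v = a := fun u v => by
      simpa using sub_eq_sub_zero_zero_of_forall_sub_eq (f := Acoef q e3) (g := fun _ _ => a)
        (fun u => by simp only [(hA u 0).2, sub_self])
        (fun u v => by simp only [Acoef_add_one_right h12, sub_self]) u v
    have hD2 := D2_eq_of_D12_of_D22 h12 h22
    have hq := eq_add_frameMap_cayley
      (D1_eq_of_D11_eq_smul h12 (fun u v => by rw [hD11, hAa]) hD2) hD2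
    have hdet : det3 (D1 q 0 0) (D2 q 0 0) e3 ≠ 0 := by rw [hΩ]; exact one_ne_zero
    refine ⟨a, (hA 0 0).1, (frameEquiv hdet).symm, -(frameEquiv hdet).symm (q 0 0), ?_⟩
    intro u v
    rw [hq u v, map_add, frameEquiv_symm_frameMap, add_neg_cancel_comm]
    rfl
end
end
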